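/- arXiv:1607.02081 — 2 statements merged into one kernel-verified Lean document; each statement's English description precedes it below -/
import Mathlib

section
/- Let N ≥ 3 be an integer, let (p,q) be a pair of primes compatible with N, and let n be an integer with 1 ≤ n ≤ N. Then min{f_x(t) : x ∈ C_n} = min{f_x(t) : x ∈ V_n} for all t > 0. -/
open Real

/-- The golden ratio `(1 + √5)/2`. -/
noncomputable def phiR : ℝ := (1 + Real.sqrt 5) / 2

/-- `mmax p q n = max(h_n·log p, h_{n-1}·log q)`, the logarithmic Mahler measure
of `p^{h_n}/q^{h_{n-1}}` for distinct primes `p`, `q`, where `h` is Fibonacci. -/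
noncomputable def mmax (p q n : ℕ) : ℝ :=
  max ((Nat.fib n : ℝ) * Real.log p) ((Nat.fib (n - 1) : ℝ) * Real.log q)

/-- `gmax n = max(h_n, φ·h_{n-1})`. -/
noncomputable def gmax (n : ℕ) : ℝ :=
  max (Nat.fib n : ℝ) (phiR * (Nat.fib (n - 1) : ℝ))

/-- The equation defining `t_n(p,q)`:
`m(p^{h_n}/q^{h_{n-1}})^t = m(p^{h_{n-1}}/q^{h_{n-2}})^t + m(p^{h_{n-2}}/q^{h_{n-3}})^t`. -/
def peq (p q n : ℕ) (t : ℝ) : Prop :=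
  mmax p q n ^ t = mmax p q (n - 1) ^ t + mmax p q (n - 2) ^ t

/-- The equation defining `s_n`:
`max(h_n, φ h_{n-1})^t = max(h_{n-1}, φ h_{n-2})^t + max(h_{n-2}, φ h_{n-3})^t`. -/
def geq (n : ℕ) (t : ℝ) : Prop :=
  gmax n ^ t = gmax (n - 1) ^ t + gmax (n - 2) ^ t

/-- Condition (W) on a pair of primes `(p,q)` relative to `N`. -/
def CondW (N p q : ℕ) : Prop :=
  ((Nat.fib N : ℝ) / Nat.fib (N - 1) < Real.log q / Real.log p ∧
    Real.log q / Real.log p < (Nat.fib (N - 1) : ℝ) / Nat.fib (N - 2)) ∨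
  ((Nat.fib (N - 1) : ℝ) / Nat.fib (N - 2) < Real.log q / Real.log p ∧
    Real.log q / Real.log p < (Nat.fib N : ℝ) / Nat.fib (N - 1))

/-- `V_n`: vectors `x ∈ ℕ^N` (1-based entry `i` is `x ⟨i-1⟩`) with
`Σ x_i h_i = h_n` and `Σ x_i h_{i-1} = h_{n-1}`. -/
def Vset (N n : ℕ) : Set (Fin N → ℕ) :=
  {x | ∑ i, x i * Nat.fib ((i : ℕ) + 1) = Nat.fib n ∧
       ∑ i, x i * Nat.fib (i : ℕ) = Nat.fib (n - 1)}

/-- The measure function `f_x(t) = (Σ_{i=1}^N x_i·max(h_i log p, h_{i-1} log q)^t)^{1/t}`. -/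
noncomputable def fmeas (N p q : ℕ) (x : Fin N → ℕ) (t : ℝ) : ℝ :=
  (∑ i, (x i : ℝ) * mmax p q ((i : ℕ) + 1) ^ t) ^ (1 / t)

/-- `x_n(i)`: the vector whose (i−2)nd (1-based) entry is `h_{n+1−i}`, whose
(i−1)st entry is `h_{n+2−i}`, and whose other entries are 0.  (For `i = 2`, `n = 1`
this gives `x_1(2) = (1,0,…,0)`.) -/
def xvec (N n i : ℕ) : Fin N → ℕ := fun j =>
  if (j : ℕ) + 3 = i then Nat.fib (n + 1 - i)
  else if (j : ℕ) + 2 = i then Nat.fib (n + 2 - i)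
  else 0

/-- `S_n = {x_n(i) : 3 ≤ i ≤ n+1}` for `n ≥ 2`, and `S_1 = {x_1(2)}`. -/
def Sset (N n : ℕ) : Set (Fin N → ℕ) :=
  if n = 1 then {xvec N 1 2}
  else {x | ∃ i, 3 ≤ i ∧ i ≤ n + 1 ∧ x = xvec N n i}

/-- `z` is almost consecutive-free: `z_j·z_{j+1} ≠ 0` implies `z_i = 0` for all `i > j+1`. -/
def ACF (N : ℕ) (z : Fin N → ℕ) : Prop :=
  ∀ (j : Fin N) (hj : (j : ℕ) + 1 < N),
    z j * z ⟨(j : ℕ) + 1, hj⟩ ≠ 0 → ∀ i : Fin N, (j : ℕ) + 1 < (i : ℕ) → z i = 0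

/-- `C_n`: the almost consecutive-free elements of `V_n`. -/
def Cset (N n : ℕ) : Set (Fin N → ℕ) := {z ∈ Vset N n | ACF N z}

/-- A factorization of `z ∈ V_n`: a `K`-tuple `x` with `x k ∈ V_{idx k}`,
`1 ≤ idx k ≤ n`, and `z = Σ_k x k`. -/
def IsFactorization (N n : ℕ) (z : Fin N → ℕ) {K : ℕ}
    (idx : Fin K → ℕ) (x : Fin K → Fin N → ℕ) : Prop :=
  (∀ k, 1 ≤ idx k ∧ idx k ≤ n ∧ x k ∈ Vset N (idx k)) ∧ z = ∑ k, x k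

/-- A tuple is `S`-type if each component lies in `∪_{i=1}^n S_i`. -/
def STypeFac (N n : ℕ) {K : ℕ} (x : Fin K → Fin N → ℕ) : Prop :=
  ∀ k, ∃ i, 1 ≤ i ∧ i ≤ n ∧ x k ∈ Sset N i

/-- `z` is `S`-restricted: every non-trivial (i.e. `K ≠ 1`) factorization is `S`-type. -/
def SRestricted (N n : ℕ) (z : Fin N → ℕ) : Prop :=
  ∀ (K : ℕ) (idx : Fin K → ℕ) (x : Fin K → Fin N → ℕ),
    IsFactorization N n z idx x → K ≠ 1 → STypeFac N n x

/-- `R_n`: the `S`-restricted elements of `C_n`. -/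
def Rset (N n : ℕ) : Set (Fin N → ℕ) := {z ∈ Cset N n | SRestricted N n z}

/-- The infimum attaining set `U_x = {t > 0 : f_x(t) = min{f_y(t) : y ∈ V_j}}`. -/
def Uset (N p q j : ℕ) (x : Fin N → ℕ) : Set ℝ :=
  {t | 0 < t ∧ IsLeast ((fun y => fmeas N p q y t) '' Vset N j) (fmeas N p q x t)}

/-- The shift map `λ((x_1,…,x_N)) = (0,x_1,…,x_{N-1})`. -/
def shiftMap (N : ℕ) (x : Fin N → ℕ) : Fin N → ℕ := fun j =>
  if (j : ℕ) = 0 then 0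
  else x ⟨(j : ℕ) - 1, lt_of_le_of_lt (Nat.sub_le _ _) j.isLt⟩

/-!
Write `f_x(t)^t` as the linear cost `∑ x_k w_k` with `w_k = m_{k+1}^t`, where `m_k = mmax p q k`.
Since `A^t ≤ B^t + C^t` holds exactly for `t ≤ τ` when `A^τ = B^τ + C^τ`, and `t_m` decreases,
the inequality `w_{c} ≤ w_{c-2} + w_{c-1}` holds below a threshold index and reverses above it.
If `x ∈ V_n` is not almost consecutive-free, with `x_j x_{j+1} ≠ 0` and `x_i ≠ 0` for some
`i > j + 1`, then either merging `e_j + e_{j+1}` into `e_{j+2}` (below the threshold) or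
splitting `e_i` into `e_{i-2} + e_{i-1}` (above it) stays in `V_n` by the Fibonacci recursion
and does not increase the cost. Each such move strictly decreases a potential, so a minimiser of
the potential among the vectors of `V_n` with at most the cost of `x` lies in `C_n`.
-/

theorem rpow_le_rpow_add_rpow_iff {A B C τ t : ℝ} (hA : 0 ≤ A) (hB : 0 < B) (hC : 0 < C)
    (hτ : 0 < τ) (h : A ^ τ = B ^ τ + C ^ τ) : A ^ t ≤ B ^ t + C ^ t ↔ t ≤ τ := by
  have hBA : B < A := (rpow_lt_rpow_iff hB.le hA hτ).1 (by linarith [rpow_pos_of_pos hC τ])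
  have hCA : C < A := (rpow_lt_rpow_iff hC.le hA hτ).1 (by linarith [rpow_pos_of_pos hB τ])
  have hA : 0 < A := hB.trans hBA
  set φ : ℝ → ℝ := fun s => (B / A) ^ s + (C / A) ^ s
  have hφ : StrictAnti φ := fun s s' hss' =>
    add_lt_add (rpow_lt_rpow_of_exponent_gt (div_pos hB hA) ((div_lt_one hA).2 hBA) hss')
      (rpow_lt_rpow_of_exponent_gt (div_pos hC hA) ((div_lt_one hA).2 hCA) hss')
  have hsum : ∀ s, B ^ s + C ^ s = A ^ s * φ s := fun s => by
    have := rpow_pos_of_pos hA s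
    simp only [φ, div_rpow hB.le hA.le, div_rpow hC.le hA.le]
    field_simp
  have hφτ : φ τ = 1 := by
    rw [hsum] at h
    exact (mul_eq_left₀ (rpow_pos_of_pos hA τ).ne').1 h.symm
  rw [hsum, le_mul_iff_one_le_right (rpow_pos_of_pos hA t), ← hφτ, hφ.le_iff_ge]

theorem exists_isLeast_image_of_subset {α β : Type*} [LinearOrder β] {s t : Set α} {f : α → β}
    (hst : s ⊆ t) (ht : t.Finite) (hne : t.Nonempty) (h : ∀ x ∈ t, ∃ y ∈ s, f y ≤ f x) :
    ∃ m, IsLeast (f '' s) m ∧ IsLeast (f '' t) m := by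
  obtain ⟨x, hx⟩ := hne
  obtain ⟨y, hy, -⟩ := h x hx
  obtain ⟨z, hz, hmin⟩ := Set.exists_min_image s f (ht.subset hst) ⟨y, hy⟩
  refine ⟨f z, ⟨Set.mem_image_of_mem f hz, ?_⟩, ⟨Set.mem_image_of_mem f (hst hz), ?_⟩⟩
  · rintro _ ⟨y, hy, rfl⟩
    exact hmin y hy
  · rintro _ ⟨y, hy, rfl⟩
    obtain ⟨y', hy', hle⟩ := h y hy
    exact (hmin y' hy').trans hle

section Exchange

variable {N n : ℕ}

def cost (w : ℕ → ℝ) (x : Fin N → ℕ) : ℝ := ∑ k, (x k : ℝ) * w k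

theorem cost_add_single (w : ℕ → ℝ) (x : Fin N → ℕ) (a : Fin N) :
    cost w (x + Pi.single a 1) = cost w x + w a := by
  simp [cost, add_mul, Finset.sum_add_distrib, Pi.single_apply]

theorem cost_single (w : ℕ → ℝ) (a : Fin N) : cost w (Pi.single a 1) = w a := by
  simpa [cost] using cost_add_single w 0 a

theorem cost_nonneg {w : ℕ → ℝ} (hw : ∀ k, 0 ≤ w k) (x : Fin N → ℕ) : 0 ≤ cost w x :=
  Finset.sum_nonneg fun k _ => mul_nonneg (Nat.cast_nonneg _) (hw k)

theorem mem_Vset_iff_cost {x : Fin N → ℕ} :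
    x ∈ Vset N n ↔ cost (fun k => Nat.fib (k + 1)) x = Nat.fib n ∧
      cost (fun k => Nat.fib k) x = Nat.fib (n - 1) := by
  simp only [Vset, cost, Set.mem_ofPred_eq]
  norm_cast

theorem exists_eq_add_single {x : Fin N → ℕ} {a : Fin N} (h : x a ≠ 0) :
    ∃ y : Fin N → ℕ, x = y + Pi.single a 1 :=
  ⟨Function.update x a (x a - 1), funext fun k => by
    by_cases hk : k = a
    · subst hk
      simp only [Pi.add_apply, Function.update_self, Pi.single_eq_same]
      omega
    · simp [hk]⟩

theorem exists_eq_add_single_add_single {x : Fin N → ℕ} {a b : Fin N} (hab : a ≠ b)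
    (ha : x a ≠ 0) (hb : x b ≠ 0) : ∃ y : Fin N → ℕ, x = y + Pi.single a 1 + Pi.single b 1 := by
  obtain ⟨x₁, rfl⟩ := exists_eq_add_single hb
  obtain ⟨y, rfl⟩ := exists_eq_add_single (x := x₁) (a := a) (by simpa [hab] using ha)
  exact ⟨y, rfl⟩

theorem add_single_add_single_mem_Vset_iff (y : Fin N → ℕ) (a : ℕ) (ha : a + 2 < N) :
    y + Pi.single ⟨a, by omega⟩ 1 + Pi.single ⟨a + 1, by omega⟩ 1 ∈ Vset N n ↔
      y + Pi.single ⟨a + 2, ha⟩ 1 ∈ Vset N n := by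
  have h₁ : (Nat.fib (a + 2 + 1) : ℝ) = Nat.fib (a + 1) + Nat.fib (a + 1 + 1) := by
    exact_mod_cast Nat.fib_add_two (n := a + 1)
  have h₂ : (Nat.fib (a + 2) : ℝ) = Nat.fib a + Nat.fib (a + 1) := by
    exact_mod_cast Nat.fib_add_two (n := a)
  simp only [mem_Vset_iff_cost, cost_add_single]
  rw [h₁, h₂, add_assoc, add_assoc]

theorem finite_Vset (N n : ℕ) : (Vset N n).Finite := by
  refine (Set.finite_Iic (fun _ : Fin N => Nat.fib n)).subset fun x hx k => ?_
  calc x k ≤ x k * Nat.fib (k + 1) := Nat.le_mul_of_pos_right _ (Nat.fib_pos.2 k.succ_pos)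
    _ ≤ ∑ i : Fin N, x i * Nat.fib (i + 1) :=
      Finset.single_le_sum (f := fun i : Fin N => x i * Nat.fib (i + 1)) (by simp) (by simp)
    _ = Nat.fib n := hx.1

theorem single_mem_Vset (h1n : 1 ≤ n) (hnN : n ≤ N) : Pi.single ⟨n - 1, by omega⟩ 1 ∈ Vset N n := by
  simp [mem_Vset_iff_cost, cost_single, Nat.sub_add_cancel h1n]

-- Merges land on indices of weight 1; a split removes a weight `2 ^ (a + 2) > 2 ^ a + 2 ^ (a + 1)`.
def potentialWeight (P : ℕ → Prop) [DecidablePred P] (k : ℕ) : ℝ := if P k then 1 else 2 ^ k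

section Potential

variable (P : ℕ → Prop) [DecidablePred P]

theorem one_le_potentialWeight (k : ℕ) : 1 ≤ potentialWeight P k := by
  unfold potentialWeight
  split_ifs
  exacts [le_rfl, one_le_pow₀ one_le_two]

theorem potentialWeight_le_two_pow (k : ℕ) : potentialWeight P k ≤ 2 ^ k := by
  unfold potentialWeight
  split_ifs
  exacts [one_le_pow₀ one_le_two, le_rfl]

variable {P}

theorem cost_potentialWeight_merge_lt (y : Fin N → ℕ) {a : ℕ} (ha : a + 2 < N) (h : P (a + 2)) :
    cost (potentialWeight P) (y + Pi.single ⟨a + 2, ha⟩ 1) <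
      cost (potentialWeight P) (y + Pi.single ⟨a, by omega⟩ 1 + Pi.single ⟨a + 1, by omega⟩ 1) := by
  have h₂ : potentialWeight P (a + 2) = 1 := if_pos h
  simp only [cost_add_single, h₂]
  linarith [one_le_potentialWeight P a, one_le_potentialWeight P (a + 1)]

theorem cost_potentialWeight_split_lt (y : Fin N → ℕ) {a : ℕ} (ha : a + 2 < N) (h : ¬P (a + 2)) :
    cost (potentialWeight P) (y + Pi.single ⟨a, by omega⟩ 1 + Pi.single ⟨a + 1, by omega⟩ 1) <
      cost (potentialWeight P) (y + Pi.single ⟨a + 2, ha⟩ 1) := by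
  have h₂ : potentialWeight P (a + 2) = 2 ^ (a + 2) := if_neg h
  simp only [cost_add_single, h₂]
  have : (2 : ℝ) ^ a + 2 ^ (a + 1) < 2 ^ (a + 2) := by
    rw [pow_succ, pow_succ, pow_succ]; linarith [pow_pos (two_pos : (0 : ℝ) < 2) a]
  linarith [potentialWeight_le_two_pow P a, potentialWeight_le_two_pow P (a + 1)]

end Potential

variable {w : ℕ → ℝ} {P : ℕ → Prop} [DecidablePred P]

theorem exists_exchange_of_not_ACF (hP : AntitoneOn P (Set.Ico 2 N))
    (hmerge : ∀ a, a + 2 < N → P (a + 2) → w (a + 2) ≤ w a + w (a + 1))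
    (hsplit : ∀ a, a + 2 < N → ¬P (a + 2) → w a + w (a + 1) ≤ w (a + 2))
    {x : Fin N → ℕ} (hx : x ∈ Vset N n) (hACF : ¬ACF N x) :
    ∃ x' ∈ Vset N n, cost w x' ≤ cost w x ∧
      cost (potentialWeight P) x' < cost (potentialWeight P) x := by
  simp only [ACF, not_forall] at hACF
  obtain ⟨⟨j, hjN⟩, hj, hprod, ⟨i, hiN⟩, hji, hi⟩ := hACF
  simp only at hj hji hprod
  by_cases hPj : P (j + 2)
  · have hj2 : j + 2 < N := by omega
    obtain ⟨y, rfl⟩ := exists_eq_add_single_add_single (by simp)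
      (left_ne_zero_of_mul hprod) (right_ne_zero_of_mul hprod)
    refine ⟨_, (add_single_add_single_mem_Vset_iff y j hj2).1 hx, ?_,
      cost_potentialWeight_merge_lt (P := P) y hj2 hPj⟩
    simp only [cost_add_single]
    linarith [hmerge j hj2 hPj]
  · obtain ⟨a, rfl⟩ : ∃ a, i = a + 2 := ⟨i - 2, by omega⟩
    have hPa : ¬P (a + 2) := fun h =>
      hPj <| hP (Set.mem_Ico.2 ⟨by omega, by omega⟩) (Set.mem_Ico.2 ⟨by omega, hiN⟩) (by omega) h
    obtain ⟨y, rfl⟩ := exists_eq_add_single hi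
    refine ⟨_, (add_single_add_single_mem_Vset_iff y a hiN).2 hx, ?_,
      cost_potentialWeight_split_lt y hiN hPa⟩
    simp only [cost_add_single]
    linarith [hsplit a hiN hPa]

theorem exists_mem_Cset_cost_le (hP : AntitoneOn P (Set.Ico 2 N))
    (hmerge : ∀ a, a + 2 < N → P (a + 2) → w (a + 2) ≤ w a + w (a + 1))
    (hsplit : ∀ a, a + 2 < N → ¬P (a + 2) → w a + w (a + 1) ≤ w (a + 2))
    {x : Fin N → ℕ} (hx : x ∈ Vset N n) : ∃ z ∈ Cset N n, cost w z ≤ cost w x := by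
  obtain ⟨z, ⟨hzV, hzx⟩, hmin⟩ := Set.exists_min_image {z ∈ Vset N n | cost w z ≤ cost w x}
    (cost (potentialWeight P)) ((finite_Vset N n).subset fun z hz => hz.1) ⟨x, hx, le_rfl⟩
  refine ⟨z, ⟨hzV, ?_⟩, hzx⟩
  by_contra hACF
  obtain ⟨z', hz'V, hz'w, hz'g⟩ := exists_exchange_of_not_ACF hP hmerge hsplit hzV hACF
  exact (hmin z' ⟨hz'V, hz'w.trans hzx⟩).not_gt hz'g

end Exchange

theorem mmax_pos {p : ℕ} (q : ℕ) (hp : 1 < p) {k : ℕ} (hk : 1 ≤ k) : 0 < mmax p q k :=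
  lt_max_of_lt_left <| mul_pos (by exact_mod_cast Nat.fib_pos.2 hk)
    (Real.log_pos (by exact_mod_cast hp))

theorem mmax_rpow_le_iff {p : ℕ} (q : ℕ) (hp : 1 < p) {a : ℕ} {τ : ℝ} (hτ : 0 < τ)
    (h : peq p q (a + 3) τ) (t : ℝ) :
    mmax p q (a + 3) ^ t ≤ mmax p q (a + 1) ^ t + mmax p q (a + 2) ^ t ↔ t ≤ τ := by
  rw [add_comm (mmax p q (a + 1) ^ t)]
  exact rpow_le_rpow_add_rpow_iff (mmax_pos q hp (by omega)).le (mmax_pos q hp (by omega))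
    (mmax_pos q hp (by omega)) hτ h

theorem stmt13_general (N p q : ℕ) (hp : p.Prime)
    (tt : ℕ → ℝ)
    (htt : ∀ m : ℕ, 3 ≤ m → m ≤ N + 1 →
      (0 < tt m ∧ peq p q m (tt m)) ∧ ∀ t' : ℝ, 0 < t' → peq p q m t' → t' = tt m)
    (hdec : ∀ m : ℕ, 3 ≤ m → m ≤ N → tt (m + 1) < tt m)
    (n : ℕ) (h1n : 1 ≤ n) (hnN : n ≤ N) :
    ∀ t : ℝ, 0 < t → ∃ m : ℝ,
      IsLeast ((fun x => fmeas N p q x t) '' Cset N n) m ∧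
      IsLeast ((fun x => fmeas N p q x t) '' Vset N n) m := by
  intro t ht
  have htt_anti : AntitoneOn tt (Set.Icc 3 (N + 1)) :=
    antitoneOn_of_add_one_le Set.ordConnected_Icc fun m _ hm hm' =>
      (hdec m hm.1 (by have := (Set.mem_Icc.1 hm').2; omega)).le
  have hP : AntitoneOn (fun c => t ≤ tt (c + 1)) (Set.Ico 2 N) := fun c hc d hd hcd h =>
    h.trans <| htt_anti (Set.mem_Icc.2 ⟨by have := hc.1; omega, by have := hc.2; omega⟩)
      (Set.mem_Icc.2 ⟨by have := hd.1; omega, by have := hd.2; omega⟩) (by omega)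
  have hsign (a : ℕ) (ha : a + 2 < N) :
      mmax p q (a + 3) ^ t ≤ mmax p q (a + 1) ^ t + mmax p q (a + 2) ^ t ↔ t ≤ tt (a + 3) :=
    mmax_rpow_le_iff q hp.one_lt (htt (a + 3) (by omega) (by omega)).1.1
      (htt (a + 3) (by omega) (by omega)).1.2 t
  have hreduce (x) (hx : x ∈ Vset N n) : ∃ z ∈ Cset N n, fmeas N p q z t ≤ fmeas N p q x t := by
    obtain ⟨z, hz, hle⟩ := exists_mem_Cset_cost_le (w := fun k => mmax p q (k + 1) ^ t) hP
      (fun a ha h => (hsign a ha).2 h) (fun a ha h => (not_le.1 (mt (hsign a ha).1 h)).le) hx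
    have hw (k : ℕ) : 0 ≤ mmax p q (k + 1) ^ t :=
      (rpow_pos_of_pos (mmax_pos q hp.one_lt k.succ_pos) t).le
    exact ⟨z, hz, rpow_le_rpow (cost_nonneg hw z) hle (by positivity)⟩
  exact exists_isLeast_image_of_subset (fun z hz => hz.1) (finite_Vset N n)
    ⟨_, single_mem_Vset h1n hnN⟩ hreduce

/-- Theorem `MainProgress` (i): for `N ≥ 3`, a pair of primes `(p,q)`
compatible with `N`, and `1 ≤ n ≤ N`, `min{f_x(t) : x ∈ C_n} = min{f_x(t) : x ∈ V_n}` for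
all `t > 0` (both minima exist and agree). -/
theorem stmt13 (N p q : ℕ) (hN : 3 ≤ N) (hp : p.Prime) (hq : q.Prime) (hW : CondW N p q)
    (tt : ℕ → ℝ)
    (htt : ∀ m : ℕ, 3 ≤ m → m ≤ N + 1 →
      (0 < tt m ∧ peq p q m (tt m)) ∧ ∀ t' : ℝ, 0 < t' → peq p q m t' → t' = tt m)
    (hdec : ∀ m : ℕ, 3 ≤ m → m ≤ N → tt (m + 1) < tt m)
    (n : ℕ) (h1n : 1 ≤ n) (hnN : n ≤ N) :
    ∀ t : ℝ, 0 < t → ∃ m : ℝ,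
      IsLeast ((fun x => fmeas N p q x t) '' Cset N n) m ∧
      IsLeast ((fun x => fmeas N p q x t) '' Vset N n) m :=
  stmt13_general N p q hp tt htt hdec n h1n hnN
end

section
/- Let N ≥ 3 be an integer, let (p,q) be a pair of primes compatible with N, and let n be an integer with 1 ≤ n ≤ N. If min{f_x(t) : x ∈ S_i} = min{f_x(t) : x ∈ V_i} for all integers 1 ≤ i < n and all t > 0, then min{f_x(t) : x ∈ R_n} = min{f_x(t) : x ∈ V_n} for all t > 0. -/
open Real

-- ===================== auxiliary development =====================

/-- unit vector at 1-based position `p`. -/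
def unitv (N p : ℕ) : Fin N → ℕ := fun j => if (j : ℕ) + 1 = p then 1 else 0

/-- weighted sum with ℕ weights; weight of 1-based position `r` is `c r`. -/
def wsum (N : ℕ) (c : ℕ → ℕ) (x : Fin N → ℕ) : ℕ := ∑ j, x j * c ((j : ℕ) + 1)

/-- weighted sum with ℝ weights. -/
noncomputable def rsum (N : ℕ) (E : ℕ → ℝ) (x : Fin N → ℕ) : ℝ :=
  ∑ j, (x j : ℝ) * E ((j : ℕ) + 1)

lemma wsum_unitv (N : ℕ) (c : ℕ → ℕ) {p : ℕ} (h1 : 1 ≤ p) (h2 : p ≤ N) :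
    wsum N c (unitv N p) = c p := by
  have hp : p - 1 < N := by omega
  rw [wsum, Finset.sum_eq_single ⟨p - 1, hp⟩]
  · have hv : ((⟨p - 1, hp⟩ : Fin N) : ℕ) = p - 1 := rfl
    simp only [unitv, hv, show p - 1 + 1 = p by omega, if_pos trivial, if_true, one_mul]
  · intro b _ hb
    have : (b : ℕ) + 1 ≠ p := by
      intro h; apply hb; apply Fin.ext; simp; omega
    simp [unitv, this]
  · intro h; exact absurd (Finset.mem_univ _) h

lemma rsum_unitv (N : ℕ) (E : ℕ → ℝ) {p : ℕ} (h1 : 1 ≤ p) (h2 : p ≤ N) :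
    rsum N E (unitv N p) = E p := by
  have hp : p - 1 < N := by omega
  rw [rsum, Finset.sum_eq_single ⟨p - 1, hp⟩]
  · have hv : ((⟨p - 1, hp⟩ : Fin N) : ℕ) = p - 1 := rfl
    simp only [unitv, hv, show p - 1 + 1 = p by omega, if_pos trivial, if_true, Nat.cast_one, one_mul]
  · intro b _ hb
    have : (b : ℕ) + 1 ≠ p := by
      intro h; apply hb; apply Fin.ext; simp; omega
    simp [unitv, this]
  · intro h; exact absurd (Finset.mem_univ _) h

lemma wsum_add (N : ℕ) (c : ℕ → ℕ) (x y : Fin N → ℕ) :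
    wsum N c (x + y) = wsum N c x + wsum N c y := by
  simp [wsum, Pi.add_apply, add_mul, Finset.sum_add_distrib]

lemma rsum_add (N : ℕ) (E : ℕ → ℝ) (x y : Fin N → ℕ) :
    rsum N E (x + y) = rsum N E x + rsum N E y := by
  simp [rsum, Pi.add_apply, add_mul, Finset.sum_add_distrib]

lemma wsum_sum (N : ℕ) (c : ℕ → ℕ) {K : ℕ} (f : Fin K → Fin N → ℕ) :
    wsum N c (∑ k, f k) = ∑ k, wsum N c (f k) := by
  simp only [wsum, Finset.sum_apply, Finset.sum_mul]
  exact Finset.sum_comm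

lemma rsum_sum (N : ℕ) (E : ℕ → ℝ) {K : ℕ} (f : Fin K → Fin N → ℕ) :
    rsum N E (∑ k, f k) = ∑ k, rsum N E (f k) := by
  simp only [rsum, Finset.sum_apply, Nat.cast_sum, Finset.sum_mul]
  exact Finset.sum_comm

/-- Bridge to the `Vset` definition. -/
lemma wsum_fib0 (N : ℕ) (x : Fin N → ℕ) :
    wsum N (fun r => Nat.fib (r - 1)) x = ∑ j : Fin N, x j * Nat.fib (j : ℕ) :=
  Finset.sum_congr rfl fun j _ => by simp only []; rw [Nat.add_sub_cancel]

lemma Vset_iff (N n : ℕ) (x : Fin N → ℕ) :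
    x ∈ Vset N n ↔ wsum N Nat.fib x = Nat.fib n ∧
      wsum N (fun r => Nat.fib (r - 1)) x = Nat.fib (n - 1) := by
  rw [show (x ∈ Vset N n) = ((∑ i, x i * Nat.fib ((i : ℕ) + 1) = Nat.fib n) ∧
       (∑ i, x i * Nat.fib (i : ℕ) = Nat.fib (n - 1))) from rfl, wsum_fib0]
  exact Iff.rfl

/-- `xvec` as combination of units (valid for `a ≥ 3`). -/
lemma xvec_repr (N n a : ℕ) (ha : 3 ≤ a) :
    xvec N n a = fun j => Nat.fib (n + 1 - a) * unitv N (a - 2) j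
      + Nat.fib (n + 2 - a) * unitv N (a - 1) j := by
  funext j
  simp only [xvec, unitv]
  by_cases h1 : (j : ℕ) + 3 = a
  · rw [if_pos h1, if_pos (by omega), if_neg (by omega)]; ring
  · rw [if_neg h1]
    by_cases h2 : (j : ℕ) + 2 = a
    · rw [if_pos h2, if_neg (by omega), if_pos (by omega)]; ring
    · rw [if_neg h2, if_neg (by omega), if_neg (by omega)]; ring

lemma wsum_xvec (N n a : ℕ) (c : ℕ → ℕ) (ha : 3 ≤ a) (haN : a ≤ N + 1) :
    wsum N c (xvec N n a) = Nat.fib (n + 1 - a) * c (a - 2) + Nat.fib (n + 2 - a) * c (a - 1) := by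
  rw [xvec_repr N n a ha, wsum]
  have : ∀ j : Fin N,
      (Nat.fib (n + 1 - a) * unitv N (a - 2) j + Nat.fib (n + 2 - a) * unitv N (a - 1) j)
        * c ((j : ℕ) + 1)
      = Nat.fib (n + 1 - a) * (unitv N (a-2) j * c ((j:ℕ)+1))
        + Nat.fib (n + 2 - a) * (unitv N (a-1) j * c ((j:ℕ)+1)) := by
    intro j; ring
  rw [Finset.sum_congr rfl fun j _ => this j, Finset.sum_add_distrib,
    ← Finset.mul_sum, ← Finset.mul_sum]
  rw [show (∑ j : Fin N, unitv N (a-2) j * c ((j:ℕ)+1)) = wsum N c (unitv N (a-2)) from rfl]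
  rw [show (∑ j : Fin N, unitv N (a-1) j * c ((j:ℕ)+1)) = wsum N c (unitv N (a-1)) from rfl]
  rw [wsum_unitv N c (by omega) (by omega), wsum_unitv N c (by omega) (by omega)]

lemma rsum_xvec (N n a : ℕ) (E : ℕ → ℝ) (ha : 3 ≤ a) (haN : a ≤ N + 1) :
    rsum N E (xvec N n a) = Nat.fib (n + 1 - a) * E (a - 2) + Nat.fib (n + 2 - a) * E (a - 1) := by
  rw [xvec_repr N n a ha, rsum]
  have : ∀ j : Fin N,
      ((Nat.fib (n + 1 - a) * unitv N (a - 2) j + Nat.fib (n + 2 - a) * unitv N (a - 1) j : ℕ) : ℝ)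
        * E ((j : ℕ) + 1)
      = (Nat.fib (n + 1 - a) : ℝ) * ((unitv N (a-2) j : ℝ) * E ((j:ℕ)+1))
        + (Nat.fib (n + 2 - a) : ℝ) * ((unitv N (a-1) j : ℝ) * E ((j:ℕ)+1)) := by
    intro j; push_cast; ring
  rw [Finset.sum_congr rfl fun j _ => this j, Finset.sum_add_distrib,
    ← Finset.mul_sum, ← Finset.mul_sum]
  rw [show (∑ j : Fin N, (unitv N (a-2) j : ℝ) * E ((j:ℕ)+1)) = rsum N E (unitv N (a-2)) from rfl]
  rw [show (∑ j : Fin N, (unitv N (a-1) j : ℝ) * E ((j:ℕ)+1)) = rsum N E (unitv N (a-1)) from rfl]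
  rw [rsum_unitv N E (by omega) (by omega), rsum_unitv N E (by omega) (by omega)]

lemma unitv_mem_V (N i : ℕ) (h1 : 1 ≤ i) (h2 : i ≤ N) : unitv N i ∈ Vset N i := by
  rw [Vset_iff]
  constructor
  · rw [wsum_unitv N _ h1 h2]
  · rw [wsum_unitv N _ h1 h2]

lemma xvec_mem_V (N n a : ℕ) (ha3 : 3 ≤ a) (han : a ≤ n + 1) (haN : a ≤ N + 1) :
    xvec N n a ∈ Vset N n := by
  rw [Vset_iff]
  constructor
  · rw [wsum_xvec N n a _ ha3 haN]
    have key := Nat.fib_add (n + 1 - a) (a - 2)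
    rw [show n + 1 - a + (a - 2) + 1 = n by omega, show n + 1 - a + 1 = n + 2 - a by omega,
      show a - 2 + 1 = a - 1 by omega] at key
    exact key.symm
  · rw [wsum_xvec N n a _ ha3 haN]
    have key := Nat.fib_add (n + 1 - a) (a - 3)
    rw [show n + 1 - a + (a - 3) + 1 = n - 1 by omega, show n + 1 - a + 1 = n + 2 - a by omega,
      show a - 3 + 1 = a - 2 by omega] at key
    rw [show a - 2 - 1 = a - 3 by omega, show a - 1 - 1 = a - 2 by omega]
    exact key.symm

lemma xvec12_eq_unitv (N : ℕ) : xvec N 1 2 = unitv N 1 := by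
  funext j
  simp only [xvec, unitv]
  by_cases h1 : (j : ℕ) + 3 = 2
  · omega
  · rw [if_neg h1]
    by_cases h2 : (j : ℕ) + 2 = 2
    · rw [if_pos h2, if_pos (by omega)]; simp
    · rw [if_neg h2, if_neg (by omega)]

-- ============ fib helpers ============

lemma fib_lt_add2 (k : ℕ) (hk : 1 ≤ k) : Nat.fib k < Nat.fib (k + 2) := by
  rw [Nat.fib_add_two]
  have : 0 < Nat.fib (k + 1) := Nat.fib_pos.mpr (by omega)
  omega

lemma cassiniZ (k : ℕ) : (Nat.fib (k+1) : ℤ)^2 - Nat.fib (k+2) * Nat.fib k = (-1)^k := by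
  induction k with
  | zero => norm_num
  | succ k ih =>
    have hb2 : (Nat.fib (k+2) : ℤ) = Nat.fib (k+1) + Nat.fib k := by
      rw [Nat.fib_add_two]; push_cast; ring
    have hb3 : (Nat.fib (k+3) : ℤ) = Nat.fib (k+2) + Nat.fib (k+1) := by
      rw [show k+3 = (k+1)+2 from rfl, Nat.fib_add_two]; push_cast; ring
    show (Nat.fib (k+2) : ℤ)^2 - Nat.fib (k+3) * Nat.fib (k+1) = (-1)^(k+1)
    linear_combination (-1:ℤ) * ih - (Nat.fib (k+1):ℤ) * hb3 + (Nat.fib (k+2):ℤ) * hb2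

lemma cassini_unique (w c d c' d' : ℕ) (hw : 2 ≤ w)
    (h1 : c * Nat.fib (w-1) + d * Nat.fib w = c' * Nat.fib (w-1) + d' * Nat.fib w)
    (h2 : c * Nat.fib (w-2) + d * Nat.fib (w-1) = c' * Nat.fib (w-2) + d' * Nat.fib (w-1)) :
    c = c' ∧ d = d' := by
  obtain ⟨k, rfl⟩ : ∃ k, w = k + 2 := ⟨w - 2, by omega⟩
  rw [show k+2-1 = k+1 by omega] at h1 h2
  rw [show k+2-2 = k by omega] at h2
  have e1 : ((c:ℤ) - c') * Nat.fib (k+1) + ((d:ℤ) - d') * Nat.fib (k+2) = 0 := by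
    have := congrArg (Nat.cast : ℕ → ℤ) h1; push_cast at this; linarith
  have e2 : ((c:ℤ) - c') * Nat.fib k + ((d:ℤ) - d') * Nat.fib (k+1) = 0 := by
    have := congrArg (Nat.cast : ℕ → ℤ) h2; push_cast at this; linarith
  have hc := cassiniZ k
  have hX : ((c:ℤ) - c') * (-1)^k = 0 := by
    linear_combination (Nat.fib (k+1) : ℤ) * e1 - (Nat.fib (k+2) : ℤ) * e2 - ((c:ℤ) - c') * hc
  have hXz : (c:ℤ) - c' = 0 := by
    rcases mul_eq_zero.mp hX with h | h
    · exact h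
    · exact absurd h (pow_ne_zero _ (by norm_num))
  have hfib2 : (0:ℤ) < Nat.fib (k+2) := by exact_mod_cast Nat.fib_pos.mpr (by omega)
  have hYz : (d:ℤ) - d' = 0 := by
    have h0 : ((c:ℤ) - c') * Nat.fib (k+1) = 0 := by rw [hXz]; ring
    rcases mul_eq_zero.mp (by linarith [e1, h0] : ((d:ℤ) - d') * Nat.fib (k+2) = 0) with h | h
    · exact h
    · linarith
  omega
  
lemma fib_pair_lt_aux (r i : ℕ) (hr : 1 ≤ r) (hlt : r < i)
    (h1 : Nat.fib r = Nat.fib i) (h2 : Nat.fib (r-1) = Nat.fib (i-1)) : False := by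
  rcases Nat.lt_or_ge r 2 with hr2 | hr2
  · have hr1 : r = 1 := by omega
    subst hr1
    simp only [show (1:ℕ) - 1 = 0 from rfl, Nat.fib_zero] at h2
    have : i - 1 = 0 := Nat.fib_eq_zero.mp h2.symm
    omega
  · have := lt_of_lt_of_le (Nat.fib_lt_fib_succ hr2) (Nat.fib_mono (show r + 1 ≤ i by omega))
    omega

lemma fib_pair_inj (r i : ℕ) (hr : 1 ≤ r) (hi : 1 ≤ i)
    (h1 : Nat.fib r = Nat.fib i) (h2 : Nat.fib (r-1) = Nat.fib (i-1)) : r = i := by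
  rcases lt_trichotomy r i with h | h | h
  · exact absurd (fib_pair_lt_aux r i hr h h1 h2) not_false
  · exact h
  · exact absurd (fib_pair_lt_aux i r hi h h1.symm h2.symm) not_false

-- ============ moves ============

lemma move_merge (N J : ℕ) (hJ1 : 1 ≤ J) (hJN : J + 2 ≤ N) (x : Fin N → ℕ)
    (h1 : ∀ j : Fin N, (j:ℕ) + 1 = J → 1 ≤ x j) (h2 : ∀ j : Fin N, (j:ℕ) + 1 = J + 1 → 1 ≤ x j) :
    ∃ y : Fin N → ℕ, y + unitv N J + unitv N (J+1) = x + unitv N (J+2) := by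
  refine ⟨fun j => if (j:ℕ) + 1 = J then x j - 1 else if (j:ℕ) + 1 = J + 1 then x j - 1
    else if (j:ℕ) + 1 = J + 2 then x j + 1 else x j, ?_⟩
  funext j
  simp only [Pi.add_apply, unitv]
  by_cases hA : (j:ℕ) + 1 = J
  · have hx := h1 j hA
    simp only [if_pos hA, if_neg (show ¬((j:ℕ)+1 = J+1) by omega),
      if_neg (show ¬((j:ℕ)+1 = J+2) by omega)]
    try omega
  · by_cases hB : (j:ℕ) + 1 = J + 1
    · have hx := h2 j hB
      simp only [if_neg hA, if_pos hB, if_neg (show ¬((j:ℕ)+1 = J+2) by omega)]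
      try omega
    · by_cases hC : (j:ℕ) + 1 = J + 2
      · simp only [if_neg hA, if_neg hB, if_pos hC]
        try omega
      · simp only [if_neg hA, if_neg hB, if_neg hC]
        try omega

lemma move_split (N r : ℕ) (hr3 : 3 ≤ r) (hrN : r ≤ N) (x : Fin N → ℕ)
    (hx1 : ∀ j : Fin N, (j:ℕ) + 1 = r → 1 ≤ x j) :
    ∃ y : Fin N → ℕ, y + unitv N r = x + unitv N (r-2) + unitv N (r-1) := by
  refine ⟨fun j => if (j:ℕ) + 1 = r - 2 then x j + 1 else if (j:ℕ) + 1 = r - 1 then x j + 1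
    else if (j:ℕ) + 1 = r then x j - 1 else x j, ?_⟩
  funext j
  simp only [Pi.add_apply, unitv]
  by_cases hA : (j:ℕ) + 1 = r - 2
  · simp only [if_pos hA, if_neg (show ¬((j:ℕ)+1 = r-1) by omega),
      if_neg (show ¬((j:ℕ)+1 = r) by omega)]
    try omega
  · by_cases hB : (j:ℕ) + 1 = r - 1
    · simp only [if_neg hA, if_pos hB, if_neg (show ¬((j:ℕ)+1 = r) by omega)]
      try omega
    · by_cases hC : (j:ℕ) + 1 = r
      · have hx := hx1 j hC
        simp only [if_neg hA, if_neg hB, if_pos hC]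
        try omega
      · simp only [if_neg hA, if_neg hB, if_neg hC]
        try omega

lemma wsum_merge_rel (N J : ℕ) (hJ1 : 1 ≤ J) (hJN : J + 2 ≤ N) (c : ℕ → ℕ)
    {x y : Fin N → ℕ} (hid : y + unitv N J + unitv N (J+1) = x + unitv N (J+2)) :
    wsum N c y + c J + c (J+1) = wsum N c x + c (J+2) := by
  have := congrArg (wsum N c) hid
  rwa [wsum_add, wsum_add, wsum_add, wsum_unitv N c hJ1 (by omega),
    wsum_unitv N c (by omega) (by omega), wsum_unitv N c (by omega) (by omega)] at this

lemma rsum_merge_rel (N J : ℕ) (hJ1 : 1 ≤ J) (hJN : J + 2 ≤ N) (E : ℕ → ℝ)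
    {x y : Fin N → ℕ} (hid : y + unitv N J + unitv N (J+1) = x + unitv N (J+2)) :
    rsum N E y + E J + E (J+1) = rsum N E x + E (J+2) := by
  have := congrArg (rsum N E) hid
  rwa [rsum_add, rsum_add, rsum_add, rsum_unitv N E hJ1 (by omega),
    rsum_unitv N E (by omega) (by omega), rsum_unitv N E (by omega) (by omega)] at this

lemma wsum_split_rel (N r : ℕ) (hr3 : 3 ≤ r) (hrN : r ≤ N) (c : ℕ → ℕ)
    {x y : Fin N → ℕ} (hid : y + unitv N r = x + unitv N (r-2) + unitv N (r-1)) :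
    wsum N c y + c r = wsum N c x + c (r-2) + c (r-1) := by
  have := congrArg (wsum N c) hid
  rwa [wsum_add, wsum_add, wsum_add, wsum_unitv N c (by omega) hrN,
    wsum_unitv N c (by omega) (by omega), wsum_unitv N c (by omega) (by omega)] at this

lemma rsum_split_rel (N r : ℕ) (hr3 : 3 ≤ r) (hrN : r ≤ N) (E : ℕ → ℝ)
    {x y : Fin N → ℕ} (hid : y + unitv N r = x + unitv N (r-2) + unitv N (r-1)) :
    rsum N E y + E r = rsum N E x + E (r-2) + E (r-1) := by
  have := congrArg (rsum N E) hid
  rwa [rsum_add, rsum_add, rsum_add, rsum_unitv N E (by omega) hrN,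
    rsum_unitv N E (by omega) (by omega), rsum_unitv N E (by omega) (by omega)] at this

lemma Vmem_of_merge (N i J : ℕ) (hJ1 : 1 ≤ J) (hJN : J + 2 ≤ N)
    {x y : Fin N → ℕ} (hx : x ∈ Vset N i)
    (hid : y + unitv N J + unitv N (J+1) = x + unitv N (J+2)) : y ∈ Vset N i := by
  rw [Vset_iff] at hx ⊢
  constructor
  · have h := wsum_merge_rel N J hJ1 hJN Nat.fib hid
    have hf : Nat.fib (J+2) = Nat.fib J + Nat.fib (J+1) := Nat.fib_add_two
    omega
  · have h := wsum_merge_rel N J hJ1 hJN (fun r => Nat.fib (r-1)) hid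
    beta_reduce at h
    rw [show J+1-1 = J by omega, show J+2-1 = J+1 by omega] at h
    have hf : Nat.fib (J+1) = Nat.fib (J-1) + Nat.fib J := by
      have := Nat.fib_add_two (n := J-1)
      rw [show J-1+2 = J+1 by omega, show J-1+1 = J by omega] at this
      exact this
    omega

lemma Vmem_of_split (N i r : ℕ) (hr3 : 3 ≤ r) (hrN : r ≤ N)
    {x y : Fin N → ℕ} (hx : x ∈ Vset N i)
    (hid : y + unitv N r = x + unitv N (r-2) + unitv N (r-1)) : y ∈ Vset N i := by
  rw [Vset_iff] at hx ⊢
  constructor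
  · have h := wsum_split_rel N r hr3 hrN Nat.fib hid
    have hf : Nat.fib r = Nat.fib (r-2) + Nat.fib (r-1) := by
      have := Nat.fib_add_two (n := r-2)
      rw [show r-2+2 = r by omega, show r-2+1 = r-1 by omega] at this
      exact this
    omega
  · have h := wsum_split_rel N r hr3 hrN (fun s => Nat.fib (s-1)) hid
    beta_reduce at h
    rw [show r-2-1 = r-3 by omega, show r-1-1 = r-2 by omega] at h
    have hf : Nat.fib (r-1) = Nat.fib (r-3) + Nat.fib (r-2) := by
      have := Nat.fib_add_two (n := r-3)
      rw [show r-3+2 = r-1 by omega, show r-3+1 = r-2 by omega] at this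
      exact this
    omega

-- ============ minimizers ============

def MinV (N : ℕ) (E : ℕ → ℝ) (i : ℕ) : Set (Fin N → ℕ) :=
  {x | x ∈ Vset N i ∧ ∀ y ∈ Vset N i, rsum N E x ≤ rsum N E y}

lemma entry_le (N i : ℕ) {x : Fin N → ℕ} (hx : x ∈ Vset N i) (j : Fin N) : x j ≤ Nat.fib i := by
  have h1 : x j * Nat.fib ((j:ℕ)+1) ≤ Nat.fib i := by
    rw [← hx.1]
    exact Finset.single_le_sum (f := fun i : Fin N => x i * Nat.fib ((i:ℕ)+1))
      (fun _ _ => Nat.zero_le _) (Finset.mem_univ j)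
  have h2 : 0 < Nat.fib ((j:ℕ)+1) := Nat.fib_pos.mpr (by omega)
  calc x j ≤ x j * Nat.fib ((j:ℕ)+1) := Nat.le_mul_of_pos_right _ h2
    _ ≤ Nat.fib i := h1

lemma Vset_finite (N i : ℕ) : (Vset N i).Finite := by
  apply Set.Finite.subset (Set.Finite.pi (fun _ : Fin N => Set.finite_Iic (Nat.fib i)))
  intro x hx
  simp only [Set.mem_pi, Set.mem_univ, Set.mem_Iic, forall_true_left]
  intro j
  exact entry_le N i hx j

lemma MinV_nonempty (N i : ℕ) (E : ℕ → ℝ) (h1 : 1 ≤ i) (h2 : i ≤ N) :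
    (MinV N E i).Nonempty := by
  obtain ⟨a, ha, hmin⟩ := Set.exists_min_image (Vset N i) (rsum N E) (Vset_finite N i)
    ⟨unitv N i, unitv_mem_V N i h1 h2⟩
  exact ⟨a, ha, hmin⟩

lemma MinV_subset (N i : ℕ) (E : ℕ → ℝ) : MinV N E i ⊆ Vset N i := fun _ h => h.1

lemma MinV_finite (N i : ℕ) (E : ℕ → ℝ) : (MinV N E i).Finite :=
  (Vset_finite N i).subset (MinV_subset N i E)

-- ============ the weight Psi and tau vectors ============

def Bc (N : ℕ) : ℕ := N * Nat.fib N + 1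

def psiw (N w : ℕ) : ℕ → ℕ := fun r => Bc N * (if r + 2 ≤ w then 1 else 0) + 1

def Psi (N w : ℕ) (x : Fin N → ℕ) : ℕ := wsum N (psiw N w) x

def L1f (N w : ℕ) (x : Fin N → ℕ) : ℕ := wsum N (fun r => if r + 2 ≤ w then 1 else 0) x

def cnt (N : ℕ) (x : Fin N → ℕ) : ℕ := wsum N (fun _ => 1) x

def tauv (N w i : ℕ) : Fin N → ℕ := xvec N i (min w i + 1)

lemma Psi_eq (N w : ℕ) (x : Fin N → ℕ) : Psi N w x = Bc N * L1f N w x + cnt N x := by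
  simp only [Psi, L1f, cnt, wsum, Finset.mul_sum, ← Finset.sum_add_distrib]
  exact Finset.sum_congr rfl fun j _ => by simp only [psiw]; ring

lemma cnt_le (N i : ℕ) (hiN : i ≤ N) {x : Fin N → ℕ} (hx : x ∈ Vset N i) :
    cnt N x ≤ N * Nat.fib N := by
  have h1 : ∀ j : Fin N, x j * 1 ≤ Nat.fib N :=
    fun j => by
      have := entry_le N i hx j
      have h2 := Nat.fib_mono hiN
      omega
  calc cnt N x = ∑ j : Fin N, x j * 1 := rfl
    _ ≤ ∑ _j : Fin N, Nat.fib N := Finset.sum_le_sum fun j _ => h1 j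
    _ = N * Nat.fib N := by simp [Finset.sum_const, Finset.card_univ, mul_comm]

lemma Bc_ge (N : ℕ) (hN : 3 ≤ N) : 2 ≤ Bc N := by
  have h1 : 1 ≤ Nat.fib N := Nat.fib_pos.mpr (by omega)
  have : 3 * 1 ≤ N * Nat.fib N := Nat.mul_le_mul (by omega) h1
  simp only [Bc]; omega

lemma xvec_succ_eq_unitv (N i : ℕ) (hi : 1 ≤ i) : xvec N i (i + 1) = unitv N i := by
  funext j
  simp only [xvec, unitv]
  by_cases h1 : (j : ℕ) + 3 = i + 1
  · rw [if_pos h1, if_neg (by omega)]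
    simp [show i + 1 - (i+1) = 0 by omega]
  · rw [if_neg h1]
    by_cases h2 : (j : ℕ) + 2 = i + 1
    · rw [if_pos h2, if_pos (by omega), show i + 2 - (i+1) = 1 by omega]
      simp
    · rw [if_neg h2, if_neg (by omega)]

lemma tauv_eq_unitv (N w i : ℕ) (hi : 1 ≤ i) (hiw : i ≤ w) : tauv N w i = unitv N i := by
  rw [tauv, min_eq_right hiw, xvec_succ_eq_unitv N i hi]

lemma tauv_mem_V (N w i : ℕ) (hw2 : 2 ≤ w) (hwN : w ≤ N) (hi1 : 1 ≤ i) (hiN : i ≤ N) :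
    tauv N w i ∈ Vset N i := by
  by_cases h1 : i = 1
  · subst h1
    rw [tauv_eq_unitv N w 1 le_rfl (by omega)]
    exact unitv_mem_V N 1 le_rfl (by omega)
  · exact xvec_mem_V N i (min w i + 1) (by omega) (by omega) (by omega)

lemma tauv_mem_S (N w i : ℕ) (hw2 : 2 ≤ w) (hi1 : 1 ≤ i) : tauv N w i ∈ Sset N i := by
  by_cases h1 : i = 1
  · subst h1
    rw [Sset, if_pos rfl]
    have : min w 1 + 1 = 2 := by omega
    rw [tauv, this]
    rfl
  · rw [Sset, if_neg h1]
    exact ⟨min w i + 1, by omega, by omega, rfl⟩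

-- ============ combination representation lemmas ============

lemma wsum_two (N : ℕ) (cw : ℕ → ℕ) (c1 c2 p1 p2 : ℕ)
    (h11 : 1 ≤ p1) (h12 : p1 ≤ N) (h21 : 1 ≤ p2) (h22 : p2 ≤ N) :
    wsum N cw (fun j => c1 * unitv N p1 j + c2 * unitv N p2 j) = c1 * cw p1 + c2 * cw p2 := by
  have : ∀ j : Fin N, (c1 * unitv N p1 j + c2 * unitv N p2 j) * cw ((j:ℕ)+1)
      = c1 * (unitv N p1 j * cw ((j:ℕ)+1)) + c2 * (unitv N p2 j * cw ((j:ℕ)+1)) := fun j => by ring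
  rw [wsum, Finset.sum_congr rfl fun j _ => this j, Finset.sum_add_distrib,
    ← Finset.mul_sum, ← Finset.mul_sum,
    show (∑ j : Fin N, unitv N p1 j * cw ((j:ℕ)+1)) = wsum N cw (unitv N p1) from rfl,
    show (∑ j : Fin N, unitv N p2 j * cw ((j:ℕ)+1)) = wsum N cw (unitv N p2) from rfl,
    wsum_unitv N cw h11 h12, wsum_unitv N cw h21 h22]

lemma wsum_three (N : ℕ) (cw : ℕ → ℕ) (c1 c2 p0 p1 p2 : ℕ)
    (h01 : 1 ≤ p0) (h02 : p0 ≤ N)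
    (h11 : 1 ≤ p1) (h12 : p1 ≤ N) (h21 : 1 ≤ p2) (h22 : p2 ≤ N) :
    wsum N cw (fun j => unitv N p0 j + c1 * unitv N p1 j + c2 * unitv N p2 j)
      = cw p0 + c1 * cw p1 + c2 * cw p2 := by
  have : ∀ j : Fin N, (unitv N p0 j + c1 * unitv N p1 j + c2 * unitv N p2 j) * cw ((j:ℕ)+1)
      = unitv N p0 j * cw ((j:ℕ)+1) + c1 * (unitv N p1 j * cw ((j:ℕ)+1))
        + c2 * (unitv N p2 j * cw ((j:ℕ)+1)) := fun j => by ring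
  rw [wsum, Finset.sum_congr rfl fun j _ => this j, Finset.sum_add_distrib,
    Finset.sum_add_distrib, ← Finset.mul_sum, ← Finset.mul_sum,
    show (∑ j : Fin N, unitv N p0 j * cw ((j:ℕ)+1)) = wsum N cw (unitv N p0) from rfl,
    show (∑ j : Fin N, unitv N p1 j * cw ((j:ℕ)+1)) = wsum N cw (unitv N p1) from rfl,
    show (∑ j : Fin N, unitv N p2 j * cw ((j:ℕ)+1)) = wsum N cw (unitv N p2) from rfl,
    wsum_unitv N cw h01 h02, wsum_unitv N cw h11 h12, wsum_unitv N cw h21 h22]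

-- ============ minimizer support lemma ============

lemma min_support (N : ℕ) (E : ℕ → ℝ) (w : ℕ) (hw2 : 2 ≤ w) (hwN : w ≤ N)
    (Hspl : ∀ r, w + 1 ≤ r → r ≤ N → E (r-2) + E (r-1) < E r)
    {i : ℕ} {x : Fin N → ℕ} (hx : x ∈ MinV N E i) (j : Fin N) (hj : w < (j:ℕ)+1) : x j = 0 := by
  by_contra hne
  have hr3 : 3 ≤ (j:ℕ)+1 := by omega
  have hrN : (j:ℕ)+1 ≤ N := by have := j.isLt; omega
  obtain ⟨y, hid⟩ := move_split N ((j:ℕ)+1) hr3 hrN x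
    (fun j' hj' => by
      have : j' = j := Fin.ext (by omega)
      subst this
      omega)
  have hyV := Vmem_of_split N i ((j:ℕ)+1) hr3 hrN hx.1 hid
  have hrel := rsum_split_rel N ((j:ℕ)+1) hr3 hrN E hid
  have hlt := Hspl ((j:ℕ)+1) (by omega) hrN
  have hcon := hx.2 y hyV
  linarith

-- ============ uniqueness lemmas ============

lemma support_top_eq_tau (N w i : ℕ) (hw2 : 2 ≤ w) (hwN : w ≤ N) (hi1 : 1 ≤ i)
    (hiw : w - 1 ≤ i) (hiN : i ≤ N) {x : Fin N → ℕ} (hx : x ∈ Vset N i)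
    (hlow : ∀ j : Fin N, (j:ℕ) + 3 ≤ w → x j = 0)
    (hhigh : ∀ j : Fin N, w < (j:ℕ) + 1 → x j = 0) : x = tauv N w i := by
  have hwm2 : w - 2 < N := by omega
  have hwm1 : w - 1 < N := by omega
  have hrep : x = fun j => x ⟨w-2, hwm2⟩ * unitv N (w-1) j + x ⟨w-1, hwm1⟩ * unitv N w j := by
    funext j
    simp only [unitv]
    by_cases hA : (j:ℕ)+1 = w-1
    · rw [if_pos hA, if_neg (by omega), mul_one, mul_zero, add_zero]
      congr 1
      exact Fin.ext (by simp; omega)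
    · by_cases hB : (j:ℕ)+1 = w
      · rw [if_neg hA, if_pos hB, mul_zero, mul_one, zero_add]
        congr 1
        exact Fin.ext (by simp; omega)
      · rw [if_neg hA, if_neg hB, mul_zero, mul_zero, add_zero]
        rcases Nat.lt_or_ge ((j:ℕ)+1) (w-1) with h | h
        · exact hlow j (by omega)
        · exact hhigh j (by omega)
  have hxe := (Vset_iff N i x).mp hx
  have he1 : x ⟨w-2, hwm2⟩ * Nat.fib (w-1) + x ⟨w-1, hwm1⟩ * Nat.fib w = Nat.fib i := by
    have h := hxe.1
    rw [hrep, wsum_two N Nat.fib _ _ (w-1) w (by omega) (by omega) (by omega) hwN] at h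
    exact h
  have he2 : x ⟨w-2, hwm2⟩ * Nat.fib (w-2) + x ⟨w-1, hwm1⟩ * Nat.fib (w-1) = Nat.fib (i-1) := by
    have h := hxe.2
    rw [hrep, wsum_two N _ _ _ (w-1) w (by omega) (by omega) (by omega) hwN] at h
    beta_reduce at h
    rw [show w-1-1 = w-2 by omega] at h
    exact h
  rcases le_or_gt w i with hwi | hiw'
  · -- i ≥ w, tau has coefficients fib (i-w), fib (i+1-w)
    have hτrep : tauv N w i = fun j => Nat.fib (i-w) * unitv N (w-1) j
        + Nat.fib (i+1-w) * unitv N w j := by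
      rw [tauv, min_eq_left hwi, xvec_repr N i (w+1) (by omega)]
      rw [show w+1-2 = w-1 by omega, show w+1-1 = w by omega,
        show i+1-(w+1) = i-w by omega, show i+2-(w+1) = i+1-w by omega]
    have hτe := (Vset_iff N i (tauv N w i)).mp (tauv_mem_V N w i hw2 hwN hi1 hiN)
    have ht1 : Nat.fib (i-w) * Nat.fib (w-1) + Nat.fib (i+1-w) * Nat.fib w = Nat.fib i := by
      have h := hτe.1
      rw [hτrep, wsum_two N Nat.fib _ _ (w-1) w (by omega) (by omega) (by omega) hwN] at h
      exact h
    have ht2 : Nat.fib (i-w) * Nat.fib (w-2) + Nat.fib (i+1-w) * Nat.fib (w-1)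
        = Nat.fib (i-1) := by
      have h := hτe.2
      rw [hτrep, wsum_two N _ _ _ (w-1) w (by omega) (by omega) (by omega) hwN] at h
      beta_reduce at h
      rw [show w-1-1 = w-2 by omega] at h
      exact h
    obtain ⟨hceq, hdeq⟩ := cassini_unique w (x ⟨w-2, hwm2⟩) (x ⟨w-1, hwm1⟩)
      (Nat.fib (i-w)) (Nat.fib (i+1-w)) hw2 (he1.trans ht1.symm) (he2.trans ht2.symm)
    rw [hrep, hτrep, hceq, hdeq]
  · -- i = w - 1, tau = unitv (w-1), coefficients (1, 0)
    have hieq : i = w - 1 := by omega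
    have hτrep : tauv N w i = fun j => 1 * unitv N (w-1) j + 0 * unitv N w j := by
      rw [tauv_eq_unitv N w i hi1 (by omega)]
      funext j
      rw [hieq]
      simp
    have ht1 : 1 * Nat.fib (w-1) + 0 * Nat.fib w = Nat.fib i := by
      rw [hieq]; simp
    have ht2 : 1 * Nat.fib (w-2) + 0 * Nat.fib (w-1) = Nat.fib (i-1) := by
      rw [hieq, show w-1-1 = w-2 by omega]; simp
    obtain ⟨hceq, hdeq⟩ := cassini_unique w (x ⟨w-2, hwm2⟩) (x ⟨w-1, hwm1⟩) 1 0 hw2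
      (he1.trans ht1.symm) (he2.trans ht2.symm)
    rw [hrep, hτrep, hceq, hdeq]

lemma low_eq_unitv (N w i : ℕ) (hw2 : 2 ≤ w) (hwN : w ≤ N) (hi1 : 1 ≤ i) (hiw : i + 2 ≤ w)
    {x : Fin N → ℕ} (hx : x ∈ Vset N i)
    (hhigh : ∀ j : Fin N, w < (j:ℕ)+1 → x j = 0)
    (hL1 : L1f N w x ≤ 1) : x = unitv N i := by
  have hwm2 : w - 2 < N := by omega
  have hwm1 : w - 1 < N := by omega
  have hw3 : 3 ≤ w := by omega
  have hL1' : (∑ j : Fin N, x j * (fun r => if r + 2 ≤ w then (1:ℕ) else 0) ((j:ℕ)+1)) ≤ 1 := hL1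
  by_cases hz : ∀ j : Fin N, (j:ℕ) + 3 ≤ w → x j = 0
  · exfalso
    have hrep : x = fun j => x ⟨w-2, hwm2⟩ * unitv N (w-1) j + x ⟨w-1, hwm1⟩ * unitv N w j := by
      funext j
      simp only [unitv]
      by_cases hA : (j:ℕ)+1 = w-1
      · rw [if_pos hA, if_neg (by omega), mul_one, mul_zero, add_zero]
        congr 1
        exact Fin.ext (by simp; omega)
      · by_cases hB : (j:ℕ)+1 = w
        · rw [if_neg hA, if_pos hB, mul_zero, mul_one, zero_add]
          congr 1
          exact Fin.ext (by simp; omega)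
        · rw [if_neg hA, if_neg hB, mul_zero, mul_zero, add_zero]
          rcases Nat.lt_or_ge ((j:ℕ)+1) (w-1) with h | h
          · exact hz j (by omega)
          · exact hhigh j (by omega)
    have hxe := (Vset_iff N i x).mp hx
    have he1 : x ⟨w-2, hwm2⟩ * Nat.fib (w-1) + x ⟨w-1, hwm1⟩ * Nat.fib w = Nat.fib i := by
      have h := hxe.1
      rw [hrep, wsum_two N Nat.fib _ _ (w-1) w (by omega) (by omega) (by omega) hwN] at h
      exact h
    have he2 : x ⟨w-2, hwm2⟩ * Nat.fib (w-2) + x ⟨w-1, hwm1⟩ * Nat.fib (w-1) = Nat.fib (i-1) := by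
      have h := hxe.2
      rw [hrep, wsum_two N _ _ _ (w-1) w (by omega) (by omega) (by omega) hwN] at h
      beta_reduce at h
      rw [show w-1-1 = w-2 by omega] at h
      exact h
    have f1 : Nat.fib (w-2) + Nat.fib (w-1) = Nat.fib w := by
      have := Nat.fib_add_two (n := w-2)
      rw [show w-2+2 = w by omega, show w-2+1 = w-1 by omega] at this
      omega
    have f2 : Nat.fib (w-1) + Nat.fib w = Nat.fib (w+1) := by
      have := Nat.fib_add_two (n := w-1)
      rw [show w-1+2 = w+1 by omega, show w-1+1 = w by omega] at this
      omega
    have f3 : Nat.fib (i-1) + Nat.fib i = Nat.fib (i+1) := by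
      have := Nat.fib_add_two (n := i-1)
      rw [show i-1+2 = i+1 by omega, show i-1+1 = i by omega] at this
      omega
    have hc1 : x ⟨w-2, hwm2⟩ * Nat.fib (w-2) + x ⟨w-2, hwm2⟩ * Nat.fib (w-1)
        = x ⟨w-2, hwm2⟩ * Nat.fib w := by rw [← Nat.left_distrib, f1]
    have hc2 : x ⟨w-1, hwm1⟩ * Nat.fib (w-1) + x ⟨w-1, hwm1⟩ * Nat.fib w
        = x ⟨w-1, hwm1⟩ * Nat.fib (w+1) := by rw [← Nat.left_distrib, f2]
    have hsum : x ⟨w-2, hwm2⟩ * Nat.fib w + x ⟨w-1, hwm1⟩ * Nat.fib (w+1) = Nat.fib (i+1) := by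
      omega
    have hltw : Nat.fib (i+1) < Nat.fib w := by
      have hm := Nat.fib_mono (show i+1 ≤ w-1 by omega)
      have hs := Nat.fib_lt_fib_succ (show 2 ≤ w-1 by omega)
      rw [show w-1+1 = w by omega] at hs
      omega
    have hfw1 : Nat.fib w ≤ Nat.fib (w+1) := Nat.fib_mono (by omega)
    have hc0 : x ⟨w-2, hwm2⟩ = 0 := by
      by_contra h
      have : Nat.fib w ≤ x ⟨w-2, hwm2⟩ * Nat.fib w :=
        Nat.le_mul_of_pos_left _ (Nat.pos_of_ne_zero h)
      omega
    have hd0 : x ⟨w-1, hwm1⟩ = 0 := by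
      by_contra h
      have : Nat.fib (w+1) ≤ x ⟨w-1, hwm1⟩ * Nat.fib (w+1) :=
        Nat.le_mul_of_pos_left _ (Nat.pos_of_ne_zero h)
      omega
    rw [hc0, hd0] at hsum
    have : 0 < Nat.fib (i+1) := Nat.fib_pos.mpr (by omega)
    omega
  · push_neg at hz
    obtain ⟨j0, hj0w, hj0ne⟩ := hz
    have hj0N : (j0:ℕ) + 1 ≤ N := by have := j0.isLt; omega
    have hxj0le : x j0 ≤ 1 := by
      have h := Finset.single_le_sum
        (f := fun j : Fin N => x j * (fun r => if r + 2 ≤ w then (1:ℕ) else 0) ((j:ℕ)+1))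
        (fun _ _ => Nat.zero_le _) (Finset.mem_univ j0)
      beta_reduce at h
      rw [if_pos (show (j0:ℕ)+1+2 ≤ w by omega), mul_one] at h
      exact le_trans h hL1'
    have hxj0 : x j0 = 1 := by omega
    have hlow0 : ∀ j : Fin N, (j:ℕ)+3 ≤ w → j ≠ j0 → x j = 0 := by
      intro j1 hj1w hne
      by_contra hne1
      have hsub : ({j0, j1} : Finset (Fin N)) ⊆ Finset.univ := Finset.subset_univ _
      have h := Finset.sum_le_sum_of_subset
        (f := fun j : Fin N => x j * (fun r => if r + 2 ≤ w then (1:ℕ) else 0) ((j:ℕ)+1)) hsub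
      rw [Finset.sum_pair (show j0 ≠ j1 from fun h' => hne h'.symm)] at h
      beta_reduce at h
      rw [if_pos (show (j0:ℕ)+1+2 ≤ w by omega), if_pos (show (j1:ℕ)+1+2 ≤ w by omega),
        mul_one, mul_one] at h
      have := le_trans h hL1'
      omega
    have hrep : x = fun j => unitv N ((j0:ℕ)+1) j + x ⟨w-2, hwm2⟩ * unitv N (w-1) j
        + x ⟨w-1, hwm1⟩ * unitv N w j := by
      funext j
      simp only [unitv]
      by_cases hA : (j:ℕ)+1 = (j0:ℕ)+1
      · have hjj : j = j0 := Fin.ext (by omega)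
        subst hjj
        rw [if_pos hA, if_neg (by omega), if_neg (by omega), mul_zero, mul_zero,
          add_zero, add_zero, hxj0]
      · rw [if_neg hA]
        by_cases hB : (j:ℕ)+1 = w-1
        · rw [if_pos hB, if_neg (by omega), mul_one, mul_zero, add_zero, zero_add]
          congr 1
          exact Fin.ext (by simp; omega)
        · by_cases hC : (j:ℕ)+1 = w
          · rw [if_neg hB, if_pos hC, mul_zero, mul_one, zero_add, zero_add]
            congr 1
            exact Fin.ext (by simp; omega)
          · rw [if_neg hB, if_neg hC]
            simp only [mul_zero, add_zero, zero_add]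
            rcases Nat.lt_or_ge ((j:ℕ)+1) (w-1) with h | h
            · exact hlow0 j (by omega) (fun h' => hA (by rw [h']))
            · exact hhigh j (by omega)
    have hxe := (Vset_iff N i x).mp hx
    have he1 : Nat.fib ((j0:ℕ)+1) + x ⟨w-2, hwm2⟩ * Nat.fib (w-1)
        + x ⟨w-1, hwm1⟩ * Nat.fib w = Nat.fib i := by
      have h := hxe.1
      rw [hrep, wsum_three N Nat.fib _ _ ((j0:ℕ)+1) (w-1) w (by omega) hj0N
        (by omega) (by omega) (by omega) hwN] at h
      exact h
    have he2 : Nat.fib ((j0:ℕ)) + x ⟨w-2, hwm2⟩ * Nat.fib (w-2)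
        + x ⟨w-1, hwm1⟩ * Nat.fib (w-1) = Nat.fib (i-1) := by
      have h := hxe.2
      rw [hrep, wsum_three N _ _ _ ((j0:ℕ)+1) (w-1) w (by omega) hj0N
        (by omega) (by omega) (by omega) hwN] at h
      beta_reduce at h
      rw [show w-1-1 = w-2 by omega, show (j0:ℕ)+1-1 = (j0:ℕ) by omega] at h
      exact h
    have hfib_i_le : Nat.fib i ≤ Nat.fib (w-2) := Nat.fib_mono (by omega)
    have hfib_lt : Nat.fib (w-2) < Nat.fib w := by
      have := fib_lt_add2 (w-2) (by omega)
      rw [show w-2+2 = w by omega] at this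
      exact this
    have hfibj0 : 1 ≤ Nat.fib ((j0:ℕ)+1) := Nat.fib_pos.mpr (by omega)
    have hd0 : x ⟨w-1, hwm1⟩ = 0 := by
      by_contra h
      have : Nat.fib w ≤ x ⟨w-1, hwm1⟩ * Nat.fib w :=
        Nat.le_mul_of_pos_left _ (Nat.pos_of_ne_zero h)
      omega
    have hfibw12 : Nat.fib (w-2) ≤ Nat.fib (w-1) := Nat.fib_mono (by omega)
    have hc0 : x ⟨w-2, hwm2⟩ = 0 := by
      by_contra h
      have : Nat.fib (w-1) ≤ x ⟨w-2, hwm2⟩ * Nat.fib (w-1) :=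
        Nat.le_mul_of_pos_left _ (Nat.pos_of_ne_zero h)
      omega
    rw [hc0, hd0] at he1 he2
    simp only [zero_mul, add_zero] at he1 he2
    have hr0i : (j0:ℕ)+1 = i := by
      apply fib_pair_inj ((j0:ℕ)+1) i (by omega) hi1 he1
      rw [show (j0:ℕ)+1-1 = (j0:ℕ) by omega]
      exact he2
    rw [hrep, hc0, hd0, hr0i]
    funext j
    simp

-- ============ ACF for Psi-least minimizers ============

lemma least_ACF (N : ℕ) (E : ℕ → ℝ) (w : ℕ) (hw2 : 2 ≤ w) (hwN : w ≤ N)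
    (Hmer : ∀ J, 1 ≤ J → J + 2 ≤ w → E (J+2) ≤ E J + E (J+1))
    (Hspl : ∀ r, w + 1 ≤ r → r ≤ N → E (r-2) + E (r-1) < E r)
    {n : ℕ} {z : Fin N → ℕ} (hz : z ∈ MinV N E n)
    (hzP : ∀ y ∈ MinV N E n, Psi N w z ≤ Psi N w y) : ACF N z := by
  intro j hj hprod i hi
  by_cases hiw : w < (i:ℕ) + 1
  · exact min_support N E w hw2 hwN Hspl hz i hiw
  · exfalso
    have hJw : (j:ℕ) + 1 + 2 ≤ w := by omega
    have hJN : (j:ℕ) + 1 + 2 ≤ N := by omega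
    have hz1 : 1 ≤ z j := by
      rcases Nat.eq_zero_or_pos (z j) with h | h
      · exact absurd (by rw [h, zero_mul]) hprod
      · exact h
    have hz2 : 1 ≤ z ⟨(j:ℕ)+1, hj⟩ := by
      rcases Nat.eq_zero_or_pos (z ⟨(j:ℕ)+1, hj⟩) with h | h
      · exact absurd (by rw [h, mul_zero]) hprod
      · exact h
    obtain ⟨y, hid⟩ := move_merge N ((j:ℕ)+1) (by omega) hJN z
      (fun j' hj' => by
        have : j' = j := Fin.ext (by omega)
        subst this; exact hz1)
      (fun j' hj' => by
        have : j' = ⟨(j:ℕ)+1, hj⟩ := Fin.ext (by simp; omega)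
        subst this; exact hz2)
    have hyV := Vmem_of_merge N n ((j:ℕ)+1) (by omega) hJN hz.1 hid
    have hrelE := rsum_merge_rel N ((j:ℕ)+1) (by omega) hJN E hid
    have hEle := Hmer ((j:ℕ)+1) (by omega) hJw
    have hyle : rsum N E y ≤ rsum N E z := by linarith
    have hymin : y ∈ MinV N E n := ⟨hyV, fun v hv => le_trans hyle (hz.2 v hv)⟩
    have hrelP := wsum_merge_rel N ((j:ℕ)+1) (by omega) hJN (psiw N w) hid
    have hψJ : psiw N w ((j:ℕ)+1) = Bc N + 1 := by
      simp only [psiw, if_pos (show (j:ℕ)+1+2 ≤ w from hJw), mul_one]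
    have hψJ2 : psiw N w ((j:ℕ)+1+2) ≤ Bc N + 1 := by
      simp only [psiw]
      split_ifs <;> omega
    have hψJ1 : 1 ≤ psiw N w ((j:ℕ)+1+1) := by
      simp only [psiw]
      split_ifs <;> omega
    have hPlt : Psi N w y < Psi N w z := by
      have h1 : wsum N (psiw N w) y + psiw N w ((j:ℕ)+1) + psiw N w ((j:ℕ)+1+1)
          = wsum N (psiw N w) z + psiw N w ((j:ℕ)+1+2) := hrelP
      simp only [Psi]
      omega
    exact absurd (hzP y hymin) (by omega)

-- ============ climbing within S ============

lemma climb (N : ℕ) (E : ℕ → ℝ) (w : ℕ) (hw2 : 2 ≤ w) (hwN : w ≤ N)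
    (Hmer : ∀ J, 1 ≤ J → J + 2 ≤ w → E (J+2) ≤ E J + E (J+1))
    {i : ℕ} (hi2 : 2 ≤ i) (hiN : i + 1 ≤ N) :
    ∀ d a, 3 ≤ a → a + d = min w i + 1 → xvec N i a ∈ MinV N E i →
      tauv N w i ∈ MinV N E i := by
  intro d
  induction d with
  | zero =>
    intro a h3 heq hmem
    have : a = min w i + 1 := by omega
    rw [tauv, ← this]
    exact hmem
  | succ d ih =>
    intro a h3 heq hmem
    have haw : a ≤ min w i := by omega
    have hai : a ≤ i := by omega
    have haww : a ≤ w := by omega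
    have huv : Nat.fib (i+1-a) ≤ Nat.fib (i+2-a) := Nat.fib_mono (by omega)
    have hu1 : 1 ≤ Nat.fib (i+1-a) := Nat.fib_pos.mpr (by omega)
    have hfibstep : Nat.fib (i+2-a) - Nat.fib (i+1-a) = Nat.fib (i-a) := by
      have h := Nat.fib_add_two (n := i-a)
      rw [show i-a+2 = i+2-a by omega, show i-a+1 = i+1-a by omega] at h
      omega
    -- the intermediate vectors
    let cv : ℕ → Fin N → ℕ := fun s j =>
      if (j:ℕ)+3 = a then Nat.fib (i+1-a) - s
      else if (j:ℕ)+2 = a then Nat.fib (i+2-a) - s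
      else if (j:ℕ)+1 = a then s else 0
    have hcv0 : cv 0 = xvec N i a := by
      funext j
      simp only [cv, xvec]
      by_cases h1 : (j:ℕ)+3 = a
      · rw [if_pos h1, if_pos h1]; omega
      · rw [if_neg h1, if_neg h1]
        by_cases h2 : (j:ℕ)+2 = a
        · rw [if_pos h2, if_pos h2]; omega
        · rw [if_neg h2, if_neg h2]
          split_ifs <;> rfl
    have hstep : ∀ s, s < Nat.fib (i+1-a) → cv s ∈ MinV N E i → cv (s+1) ∈ MinV N E i := by
      intro s hs hmem'
      have hid : cv (s+1) + unitv N (a-2) + unitv N ((a-2)+1) = cv s + unitv N ((a-2)+2) := by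
        funext j
        simp only [cv, Pi.add_apply, unitv]
        by_cases hA : (j:ℕ)+3 = a
        · rw [if_pos hA, if_pos hA, if_pos (show (j:ℕ)+1 = a-2 by omega),
            if_neg (show ¬((j:ℕ)+1 = (a-2)+1) by omega),
            if_neg (show ¬((j:ℕ)+1 = (a-2)+2) by omega)]
          omega
        · rw [if_neg hA, if_neg hA]
          by_cases hB : (j:ℕ)+2 = a
          · rw [if_pos hB, if_pos hB, if_neg (show ¬((j:ℕ)+1 = a-2) by omega),
              if_pos (show (j:ℕ)+1 = (a-2)+1 by omega),
              if_neg (show ¬((j:ℕ)+1 = (a-2)+2) by omega)]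
            omega
          · rw [if_neg hB, if_neg hB]
            by_cases hC : (j:ℕ)+1 = a
            · rw [if_pos hC, if_pos hC, if_neg (show ¬((j:ℕ)+1 = a-2) by omega),
                if_neg (show ¬((j:ℕ)+1 = (a-2)+1) by omega),
                if_pos (show (j:ℕ)+1 = (a-2)+2 by omega)]
            · rw [if_neg hC, if_neg hC, if_neg (show ¬((j:ℕ)+1 = a-2) by omega),
                if_neg (show ¬((j:ℕ)+1 = (a-2)+1) by omega),
                if_neg (show ¬((j:ℕ)+1 = (a-2)+2) by omega)]
      have hJ1 : 1 ≤ a - 2 := by omega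
      have hJN : (a-2) + 2 ≤ N := by omega
      have hV := Vmem_of_merge N i (a-2) hJ1 hJN hmem'.1 hid
      have hrelE := rsum_merge_rel N (a-2) hJ1 hJN E hid
      have hEle := Hmer (a-2) hJ1 (by omega)
      have hle : rsum N E (cv (s+1)) ≤ rsum N E (cv s) := by linarith
      exact ⟨hV, fun y hy => le_trans hle (hmem'.2 y hy)⟩
    have hall : ∀ s, s ≤ Nat.fib (i+1-a) → cv s ∈ MinV N E i := by
      intro s
      induction s with
      | zero => intro _; rw [hcv0]; exact hmem
      | succ s ihs => intro hsu; exact hstep s (by omega) (ihs (by omega))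
    have hend : cv (Nat.fib (i+1-a)) = xvec N i (a+1) := by
      funext j
      simp only [cv, xvec]
      by_cases hA : (j:ℕ)+3 = a
      · rw [if_pos hA, if_neg (show ¬((j:ℕ)+3 = a+1) by omega),
          if_neg (show ¬((j:ℕ)+2 = a+1) by omega)]
        omega
      · rw [if_neg hA]
        by_cases hB : (j:ℕ)+2 = a
        · rw [if_pos hB, if_pos (show (j:ℕ)+3 = a+1 by omega),
            show i+1-(a+1) = i-a by omega]
          omega
        · rw [if_neg hB]
          by_cases hC : (j:ℕ)+1 = a
          · rw [if_pos hC, if_neg (show ¬((j:ℕ)+3 = a+1) by omega),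
              if_pos (show (j:ℕ)+2 = a+1 by omega),
              show i+2-(a+1) = i+1-a by omega]
          · rw [if_neg hC, if_neg (show ¬((j:ℕ)+3 = a+1) by omega),
              if_neg (show ¬((j:ℕ)+2 = a+1) by omega)]
    exact ih (a+1) (by omega) (by omega) (by rw [← hend]; exact hall _ le_rfl)

-- ============ tau is a minimizer ============

lemma tau_min (N : ℕ) (E : ℕ → ℝ) (w : ℕ) (hw2 : 2 ≤ w) (hwN : w ≤ N)
    (Hmer : ∀ J, 1 ≤ J → J + 2 ≤ w → E (J+2) ≤ E J + E (J+1))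
    (Hspl : ∀ r, w + 1 ≤ r → r ≤ N → E (r-2) + E (r-1) < E r)
    {i : ℕ} (hi1 : 1 ≤ i) (hiN : i + 1 ≤ N)
    (hSmin : ∃ s ∈ Sset N i, s ∈ MinV N E i) : tauv N w i ∈ MinV N E i := by
  obtain ⟨s, hsS, hsM⟩ := hSmin
  by_cases h1 : i = 1
  · subst h1
    rw [Sset, if_pos rfl, Set.mem_singleton_iff] at hsS
    subst hsS
    have h2 : (2:ℕ) = min w 1 + 1 := by omega
    rw [tauv, ← h2]
    exact hsM
  · have hi2 : 2 ≤ i := by omega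
    rw [Sset, if_neg h1, Set.mem_setOf_eq] at hsS
    obtain ⟨a, ha3, ha1, hseq⟩ := hsS
    subst hseq
    have haw : a ≤ min w i + 1 := by
      rcases le_or_gt a (min w i + 1) with h | h
      · exact h
      exfalso
      have hwa : w + 2 ≤ a := by
        rcases le_total w i with hc | hc
        · rw [min_eq_left hc] at h; omega
        · rw [min_eq_right hc] at h; omega
      have hjlt : a - 2 < N := by omega
      have hzero := min_support N E w hw2 hwN Hspl hsM ⟨a-2, hjlt⟩
        (show w < (a-2) + 1 by omega)
      have hval : xvec N i a ⟨a-2, hjlt⟩ = Nat.fib (i+2-a) := by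
        simp only [xvec]
        rw [if_neg (show ¬((a:ℕ)-2+3 = a) by omega), if_pos (show (a:ℕ)-2+2 = a by omega)]
      have hpos : 0 < Nat.fib (i+2-a) := Nat.fib_pos.mpr (by omega)
      omega
    exact climb N E w hw2 hwN Hmer hi2 hiN (min w i + 1 - a) a ha3 (by omega) hsM

-- ============ tau is Psi-least among minimizers ============

lemma tau_least (N : ℕ) (E : ℕ → ℝ) (w : ℕ) (hN : 3 ≤ N) (hw2 : 2 ≤ w) (hwN : w ≤ N)
    (Hspl : ∀ r, w + 1 ≤ r → r ≤ N → E (r-2) + E (r-1) < E r)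
    {i : ℕ} (hi1 : 1 ≤ i) (hiN : i + 1 ≤ N)
    {x : Fin N → ℕ} (hx : x ∈ MinV N E i) :
    Psi N w (tauv N w i) ≤ Psi N w x ∧
      (Psi N w x ≤ Psi N w (tauv N w i) → x = tauv N w i) := by
  have hhigh : ∀ j : Fin N, w < (j:ℕ)+1 → x j = 0 :=
    fun j hj => min_support N E w hw2 hwN Hspl hx j hj
  have hτV : tauv N w i ∈ Vset N i := tauv_mem_V N w i hw2 hwN hi1 (by omega)
  have hcntτ : cnt N (tauv N w i) ≤ N * Nat.fib N := cnt_le N i (by omega) hτV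
  have hcntx : cnt N x ≤ N * Nat.fib N := cnt_le N i (by omega) hx.1
  have hBc : 2 ≤ Bc N := Bc_ge N hN
  have hBgt : N * Nat.fib N < Bc N := by simp only [Bc]; omega
  rcases le_or_gt (w - 1) i with hcase | hcase
  · -- L1 of tau is zero
    have hL1τ : L1f N w (tauv N w i) = 0 := by
      by_cases hi1' : i = 1
      · subst hi1'
        have hw2' : w = 2 := by omega
        rw [tauv_eq_unitv N w 1 le_rfl (by omega)]
        rw [L1f, wsum_unitv N _ le_rfl (by omega)]
        beta_reduce
        rw [if_neg (show ¬(1 + 2 ≤ w) by omega)]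
      · have hmin3 : 3 ≤ min w i + 1 := by omega
        rw [tauv, L1f, wsum_xvec N i (min w i + 1) _ hmin3 (by omega)]
        beta_reduce
        rw [show min w i + 1 - 2 = min w i - 1 by omega,
          show min w i + 1 - 1 = min w i by omega]
        rcases le_total w i with hc | hc
        · rw [min_eq_left hc]
          rw [if_neg (show ¬(w - 1 + 2 ≤ w) by omega), if_neg (show ¬(w + 2 ≤ w) by omega)]
          simp
        · rw [min_eq_right hc, show i + 1 - (i+1) = 0 by omega]
          simp only [Nat.fib_zero, zero_mul, zero_add]
          rw [if_neg (show ¬(i + 2 ≤ w) by omega), mul_zero]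
    have hPτ : Psi N w (tauv N w i) = cnt N (tauv N w i) := by
      rw [Psi_eq, hL1τ, mul_zero, zero_add]
    rcases Nat.eq_zero_or_pos (L1f N w x) with hL1x | hL1x
    · -- x = tau
      have hlow : ∀ j : Fin N, (j:ℕ)+3 ≤ w → x j = 0 := by
        intro j hj
        have hL1x' : (∑ j : Fin N, x j * (fun r => if r + 2 ≤ w then (1:ℕ) else 0) ((j:ℕ)+1))
            = 0 := hL1x
        have h := Finset.sum_eq_zero_iff.mp hL1x' j (Finset.mem_univ j)
        beta_reduce at h
        rw [if_pos (by omega : (j:ℕ)+1+2 ≤ w), mul_one] at h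
        exact h
      have hxτ : x = tauv N w i :=
        support_top_eq_tau N w i hw2 hwN hi1 hcase (by omega) hx.1 hlow hhigh
      rw [hxτ]
      exact ⟨le_rfl, fun _ => rfl⟩
    · have hPx : Bc N ≤ Psi N w x := by
        rw [Psi_eq]
        have : Bc N * 1 ≤ Bc N * L1f N w x := Nat.mul_le_mul_left _ hL1x
        omega
      constructor
      · omega
      · intro hle
        omega
  · -- i + 2 ≤ w regime
    have hiw : i + 2 ≤ w := by omega
    have hτu : tauv N w i = unitv N i := tauv_eq_unitv N w i hi1 (by omega)
    have hPτ : Psi N w (tauv N w i) = Bc N + 1 := by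
      rw [hτu, Psi, wsum_unitv N _ hi1 (by omega)]
      simp only [psiw]
      rw [if_pos (show i + 2 ≤ w from hiw), mul_one]
    rcases le_or_gt (L1f N w x) 1 with hL1x | hL1x
    · have hxu : x = unitv N i := low_eq_unitv N w i hw2 hwN hi1 hiw hx.1 hhigh hL1x
      rw [hxu, ← hτu]
      exact ⟨le_rfl, fun _ => rfl⟩
    · have hPx : 2 * Bc N ≤ Psi N w x := by
        rw [Psi_eq]
        have : Bc N * 2 ≤ Bc N * L1f N w x := Nat.mul_le_mul_left _ hL1x
        omega
      constructor
      · omega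
      · intro hle
        omega

-- ============ core existence theorem ============

theorem core_exists (N : ℕ) (E : ℕ → ℝ) (w : ℕ) (hN : 3 ≤ N) (hw2 : 2 ≤ w) (hwN : w ≤ N)
    (Hmer : ∀ J, 1 ≤ J → J + 2 ≤ w → E (J+2) ≤ E J + E (J+1))
    (Hspl : ∀ r, w + 1 ≤ r → r ≤ N → E (r-2) + E (r-1) < E r)
    (n : ℕ) (hn1 : 1 ≤ n) (hnN : n ≤ N)
    (HS : ∀ i, 1 ≤ i → i < n → ∃ s ∈ Sset N i, s ∈ MinV N E i) :
    ∃ z, z ∈ Rset N n ∧ z ∈ MinV N E n := by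
  obtain ⟨z, hzM, hzP⟩ := Set.exists_min_image (MinV N E n) (Psi N w)
    (MinV_finite N n E) (MinV_nonempty N n E hn1 hnN)
  have hACF : ACF N z := least_ACF N E w hw2 hwN Hmer Hspl hzM hzP
  have hSR : SRestricted N n z := by
    intro K idx xs hfac hK1
    obtain ⟨hcomp, hsum⟩ := hfac
    have hK0 : K ≠ 0 := by
      rintro rfl
      have hzz : z = 0 := by rw [hsum]; simp
      have h1 := ((Vset_iff N n z).mp hzM.1).1
      rw [hzz] at h1
      have : wsum N Nat.fib (0 : Fin N → ℕ) = 0 := by simp [wsum]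
      rw [this] at h1
      have : 0 < Nat.fib n := Nat.fib_pos.mpr (by omega)
      omega
    have hK2 : 2 ≤ K := by omega
    have hfibsum : ∑ k, Nat.fib (idx k) = Nat.fib n := by
      have h := congrArg (wsum N Nat.fib) hsum
      rw [wsum_sum] at h
      rw [Finset.sum_congr rfl (fun k _ => ((Vset_iff N (idx k) (xs k)).mp (hcomp k).2.2).1)] at h
      rw [← h]
      exact ((Vset_iff N n z).mp hzM.1).1
    have hfibsum' : ∑ k, Nat.fib (idx k - 1) = Nat.fib (n - 1) := by
      have h := congrArg (wsum N (fun r => Nat.fib (r-1))) hsum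
      rw [wsum_sum] at h
      rw [Finset.sum_congr rfl (fun k _ => ((Vset_iff N (idx k) (xs k)).mp (hcomp k).2.2).2)] at h
      rw [← h]
      exact ((Vset_iff N n z).mp hzM.1).2
    have hidxlt : ∀ k, idx k < n := by
      intro k0
      have hk1ex : ∃ k1 : Fin K, k1 ≠ k0 := by
        by_cases hc : (k0 : ℕ) = 0
        · exact ⟨⟨1, by omega⟩, fun h => by rw [← h] at hc; simp at hc⟩
        · exact ⟨⟨0, by omega⟩, fun h => by rw [← h] at hc; simp at hc⟩
      obtain ⟨k1, hne⟩ := hk1ex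
      have hpair : Nat.fib (idx k0) + Nat.fib (idx k1) ≤ ∑ k, Nat.fib (idx k) := by
        have h := Finset.sum_le_sum_of_subset (f := fun k => Nat.fib (idx k))
          (Finset.subset_univ ({k0, k1} : Finset (Fin K)))
        rwa [Finset.sum_pair (show k0 ≠ k1 from fun h => hne h.symm)] at h
      have h1 : 1 ≤ Nat.fib (idx k1) := Nat.fib_pos.mpr (hcomp k1).1
      have hlt : Nat.fib (idx k0) < Nat.fib n := by omega
      by_contra hge
      push_neg at hge
      have := Nat.fib_mono hge
      omega
    have hTmin : ∀ k, tauv N w (idx k) ∈ MinV N E (idx k) := fun k =>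
      tau_min N E w hw2 hwN Hmer Hspl (hcomp k).1 (by have := hidxlt k; omega)
        (HS (idx k) (hcomp k).1 (hidxlt k))
    have hz'V : (∑ k, tauv N w (idx k)) ∈ Vset N n := by
      rw [Vset_iff]
      constructor
      · rw [wsum_sum,
          Finset.sum_congr rfl (fun k _ => ((Vset_iff N (idx k) _).mp (hTmin k).1).1)]
        exact hfibsum
      · rw [wsum_sum,
          Finset.sum_congr rfl (fun k _ => ((Vset_iff N (idx k) _).mp (hTmin k).1).2)]
        exact hfibsum'
    have hEz : rsum N E z = ∑ k, rsum N E (xs k) := by rw [hsum, rsum_sum]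
    have hEz' : rsum N E (∑ k, tauv N w (idx k)) = ∑ k, rsum N E (tauv N w (idx k)) :=
      rsum_sum N E _
    have hterm_le : ∀ k ∈ Finset.univ, rsum N E (tauv N w (idx k)) ≤ rsum N E (xs k) :=
      fun k _ => (hTmin k).2 _ (hcomp k).2.2
    have hle1 : rsum N E (∑ k, tauv N w (idx k)) ≤ rsum N E z := by
      rw [hEz, hEz']
      exact Finset.sum_le_sum hterm_le
    have hge1 : rsum N E z ≤ rsum N E (∑ k, tauv N w (idx k)) := hzM.2 _ hz'V
    have hsum_eq : ∑ k, rsum N E (tauv N w (idx k)) = ∑ k, rsum N E (xs k) := by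
      rw [← hEz', ← hEz]
      linarith
    have hterm_eq := (Finset.sum_eq_sum_iff_of_le hterm_le).mp hsum_eq
    have hxsM : ∀ k, xs k ∈ MinV N E (idx k) := fun k =>
      ⟨(hcomp k).2.2, fun y hy => by
        rw [← hterm_eq k (Finset.mem_univ k)]
        exact (hTmin k).2 y hy⟩
    have hz'M : (∑ k, tauv N w (idx k)) ∈ MinV N E n :=
      ⟨hz'V, fun y hy => le_trans hle1 (hzM.2 y hy)⟩
    have hPz : Psi N w z = ∑ k, Psi N w (xs k) := by
      simp only [Psi]
      rw [hsum, wsum_sum]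
    have hPz' : Psi N w (∑ k, tauv N w (idx k)) = ∑ k, Psi N w (tauv N w (idx k)) := by
      simp only [Psi]
      rw [wsum_sum]
    have hPle : ∀ k ∈ Finset.univ, Psi N w (tauv N w (idx k)) ≤ Psi N w (xs k) := fun k _ =>
      (tau_least N E w hN hw2 hwN Hspl (hcomp k).1 (by have := hidxlt k; omega) (hxsM k)).1
    have hPsum_eq : ∑ k, Psi N w (tauv N w (idx k)) = ∑ k, Psi N w (xs k) := by
      have hup : ∑ k, Psi N w (xs k) ≤ ∑ k, Psi N w (tauv N w (idx k)) := by
        rw [← hPz, ← hPz']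
        exact hzP _ hz'M
      have hdn := Finset.sum_le_sum hPle
      omega
    have hPeq := (Finset.sum_eq_sum_iff_of_le hPle).mp hPsum_eq
    intro k
    refine ⟨idx k, (hcomp k).1, le_of_lt (hidxlt k), ?_⟩
    have hxt : xs k = tauv N w (idx k) :=
      (tau_least N E w hN hw2 hwN Hspl (hcomp k).1 (by have := hidxlt k; omega) (hxsM k)).2
        (le_of_eq (hPeq k (Finset.mem_univ k)).symm)
    rw [hxt]
    exact tauv_mem_S N w (idx k) hw2 (hcomp k).1
  exact ⟨z, ⟨⟨hzM.1, hACF⟩, hSR⟩, hzM⟩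

-- ============ analytic sign lemma ============

lemma rpow_continuous_base (x : ℝ) (hx : 0 < x) : Continuous fun s : ℝ => x ^ s := by
  have hfe : (fun s : ℝ => x ^ s) = fun s => Real.exp (Real.log x * s) :=
    funext fun s => Real.rpow_def_of_pos hx s
  rw [hfe]
  exact Real.continuous_exp.comp (continuous_const.mul continuous_id)

lemma sign_lemma (a b c t0 : ℝ) (ha : 0 < a) (hb : 0 < b) (hc : 0 < c)
    (ht0 : 0 < t0) (heq : a ^ t0 = b ^ t0 + c ^ t0)
    (huniq : ∀ t' : ℝ, 0 < t' → a ^ t' = b ^ t' + c ^ t' → t' = t0) :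
    ∀ t : ℝ, 0 < t → (t ≤ t0 → a ^ t ≤ b ^ t + c ^ t) ∧ (t0 < t → b ^ t + c ^ t < a ^ t) := by
  have hba : b < a := by
    by_contra h
    push_neg at h
    have h1 : a ^ t0 ≤ b ^ t0 := Real.rpow_le_rpow (le_of_lt ha) h (le_of_lt ht0)
    have h2 : 0 < c ^ t0 := Real.rpow_pos_of_pos hc _
    linarith
  have hca : c < a := by
    by_contra h
    push_neg at h
    have h1 : a ^ t0 ≤ c ^ t0 := Real.rpow_le_rpow (le_of_lt ha) h (le_of_lt ht0)
    have h2 : 0 < b ^ t0 := Real.rpow_pos_of_pos hb _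
    linarith
  have hD : Continuous fun s : ℝ => a ^ s - b ^ s - c ^ s :=
    ((rpow_continuous_base a ha).sub (rpow_continuous_base b hb)).sub
      (rpow_continuous_base c hc)
  intro t ht
  constructor
  · intro hle
    by_contra hgt
    push_neg at hgt
    have hsub := intermediate_value_Ioo (le_of_lt ht) hD.continuousOn
    have h0mem : (0:ℝ) ∈ Set.Ioo (a ^ (0:ℝ) - b ^ (0:ℝ) - c ^ (0:ℝ)) (a ^ t - b ^ t - c ^ t) := by
      simp only [Real.rpow_zero, Set.mem_Ioo]
      constructor
      · norm_num
      · linarith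
    obtain ⟨s0, hs0mem, hDs0⟩ := hsub h0mem
    beta_reduce at hDs0
    have hs0eq := huniq s0 hs0mem.1 (by linarith)
    rw [hs0eq] at hs0mem
    linarith [hs0mem.2]
  · intro hlt
    by_contra hng
    push_neg at hng
    rcases eq_or_lt_of_le hng with heq' | hlt'
    · have := huniq t ht heq'
      linarith
    · have hρ0 : 0 < max (b/a) (c/a) :=
        lt_of_lt_of_le (div_pos hb ha) (le_max_left _ _)
      have hρ1 : max (b/a) (c/a) < 1 :=
        max_lt ((div_lt_one ha).mpr hba) ((div_lt_one ha).mpr hca)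
      have htend := tendsto_rpow_atTop_of_base_lt_one (max (b/a) (c/a)) (by linarith) hρ1
      have hev1 := htend.eventually_lt_const (show (0:ℝ) < 1/2 by norm_num)
      have hev2 := Filter.eventually_gt_atTop t
      obtain ⟨T, hT1, hT2⟩ := (hev1.and hev2).exists
      have hTpos : 0 < T := lt_trans ht hT2
      have haT : 0 < a ^ T := Real.rpow_pos_of_pos ha _
      have hρT : 0 ≤ (max (b/a) (c/a)) ^ T := Real.rpow_nonneg (le_of_lt hρ0) _
      have hbT : b ^ T ≤ (max (b/a) (c/a)) ^ T * a ^ T := by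
        have hble : b ≤ max (b/a) (c/a) * a := by
          have h1 : b / a ≤ max (b/a) (c/a) := le_max_left _ _
          have h2 : b / a * a ≤ max (b/a) (c/a) * a :=
            mul_le_mul_of_nonneg_right h1 (le_of_lt ha)
          rwa [div_mul_cancel₀ b (ne_of_gt ha)] at h2
        calc b ^ T ≤ (max (b/a) (c/a) * a) ^ T :=
              Real.rpow_le_rpow (le_of_lt hb) hble (le_of_lt hTpos)
          _ = (max (b/a) (c/a)) ^ T * a ^ T := Real.mul_rpow (le_of_lt hρ0) (le_of_lt ha)
      have hcT : c ^ T ≤ (max (b/a) (c/a)) ^ T * a ^ T := by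
        have hcle : c ≤ max (b/a) (c/a) * a := by
          have h1 : c / a ≤ max (b/a) (c/a) := le_max_right _ _
          have h2 : c / a * a ≤ max (b/a) (c/a) * a :=
            mul_le_mul_of_nonneg_right h1 (le_of_lt ha)
          rwa [div_mul_cancel₀ c (ne_of_gt ha)] at h2
        calc c ^ T ≤ (max (b/a) (c/a) * a) ^ T :=
              Real.rpow_le_rpow (le_of_lt hc) hcle (le_of_lt hTpos)
          _ = (max (b/a) (c/a)) ^ T * a ^ T := Real.mul_rpow (le_of_lt hρ0) (le_of_lt ha)
      have hDT : 0 < a ^ T - b ^ T - c ^ T := by nlinarith [hT1, haT]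
      have hsub := intermediate_value_Ioo (le_of_lt hT2) hD.continuousOn
      have h0mem : (0:ℝ) ∈ Set.Ioo (a ^ t - b ^ t - c ^ t) (a ^ T - b ^ T - c ^ T) :=
        ⟨by linarith, hDT⟩
      obtain ⟨s0, hs0mem, hDs0⟩ := hsub h0mem
      beta_reduce at hDs0
      have hs0eq := huniq s0 (lt_trans ht hs0mem.1) (by linarith)
      rw [hs0eq] at hs0mem
      linarith [hs0mem.1]

-- ============ conversion helpers ============

lemma fmeas_eq_rsum (N p q : ℕ) (t : ℝ) (x : Fin N → ℕ) :
    fmeas N p q x t = rsum N (fun i => mmax p q i ^ t) x ^ (1/t) := rfl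

lemma rsum_nonneg (N : ℕ) (E : ℕ → ℝ) (hE : ∀ i, 0 ≤ E i) (x : Fin N → ℕ) :
    0 ≤ rsum N E x :=
  Finset.sum_nonneg fun j _ => mul_nonneg (Nat.cast_nonneg _) (hE _)

lemma Sset_sub_V (N i : ℕ) (h1 : 1 ≤ i) (hiN : i ≤ N) : Sset N i ⊆ Vset N i := by
  intro s hs
  by_cases hi : i = 1
  · subst hi
    rw [Sset, if_pos rfl, Set.mem_singleton_iff] at hs
    subst hs
    rw [xvec12_eq_unitv]
    exact unitv_mem_V N 1 le_rfl (by omega)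
  · rw [Sset, if_neg hi, Set.mem_setOf_eq] at hs
    obtain ⟨a, h3, ha, rfl⟩ := hs
    exact xvec_mem_V N i a h3 ha (by omega)

/-- Theorem `MainProgress` (ii): for `N ≥ 3`, a pair of primes `(p,q)`
compatible with `N`, and `1 ≤ n ≤ N`, if `min{f_x(t) : x ∈ S_i} = min{f_x(t) : x ∈ V_i}` for
all `1 ≤ i < n` and all `t > 0`, then `min{f_x(t) : x ∈ R_n} = min{f_x(t) : x ∈ V_n}` for all
`t > 0`. -/
theorem stmt14 (N p q : ℕ) (hN : 3 ≤ N) (hp : p.Prime) (hq : q.Prime) (hW : CondW N p q)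
    (tt : ℕ → ℝ)
    (htt : ∀ m : ℕ, 3 ≤ m → m ≤ N + 1 →
      (0 < tt m ∧ peq p q m (tt m)) ∧ ∀ t' : ℝ, 0 < t' → peq p q m t' → t' = tt m)
    (hdec : ∀ m : ℕ, 3 ≤ m → m ≤ N → tt (m + 1) < tt m)
    (n : ℕ) (h1n : 1 ≤ n) (hnN : n ≤ N)
    (hS : ∀ i : ℕ, 1 ≤ i → i < n → ∀ t : ℝ, 0 < t → ∃ m : ℝ,
      IsLeast ((fun x => fmeas N p q x t) '' Sset N i) m ∧
      IsLeast ((fun x => fmeas N p q x t) '' Vset N i) m) :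
    ∀ t : ℝ, 0 < t → ∃ m : ℝ,
      IsLeast ((fun x => fmeas N p q x t) '' Rset N n) m ∧
      IsLeast ((fun x => fmeas N p q x t) '' Vset N n) m := by
  intro t ht
  have hp1 : (1:ℝ) < p := by exact_mod_cast hp.one_lt
  have hlogp : 0 < Real.log p := Real.log_pos hp1
  have hmmax_pos : ∀ i : ℕ, 1 ≤ i → 0 < mmax p q i := by
    intro i hi
    have hfib : 0 < Nat.fib i := Nat.fib_pos.mpr (by omega)
    have h1 : 0 < (Nat.fib i : ℝ) * Real.log p :=
      mul_pos (by exact_mod_cast hfib) hlogp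
    exact lt_of_lt_of_le h1 (le_max_left _ _)
  have hmmax_nonneg : ∀ i : ℕ, 0 ≤ mmax p q i := by
    intro i
    have : (0:ℝ) ≤ (Nat.fib i : ℝ) * Real.log p :=
      mul_nonneg (Nat.cast_nonneg _) (le_of_lt hlogp)
    exact le_trans this (le_max_left _ _)
  have hEnonneg : ∀ i, 0 ≤ (fun i => mmax p q i ^ t) i :=
    fun i => Real.rpow_nonneg (hmmax_nonneg i) t
  -- monotonicity of the thresholds
  have ttmono : ∀ a b : ℕ, 3 ≤ a → a ≤ b → b ≤ N + 1 → tt b ≤ tt a := by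
    intro a b h3 hab
    induction b, hab using Nat.le_induction with
    | base => intro _; exact le_rfl
    | succ b hab ih =>
      intro hbN
      have h1 := ih (by omega)
      have h2 := hdec b (by omega) (by omega)
      linarith
  -- the window top m0
  have hm0ex : ∃ m0 : ℕ, 2 ≤ m0 ∧ m0 ≤ N + 1 ∧
      (∀ m, 3 ≤ m → m ≤ m0 → m ≤ N+1 → t ≤ tt m) ∧
      (∀ m, m0 < m → 3 ≤ m → m ≤ N+1 → tt m < t) := by
    by_cases hAne : ((Finset.Icc 3 (N+1)).filter (fun m => t ≤ tt m)).Nonempty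
    · have hmax := Finset.max'_mem _ hAne
      have hmax' := hmax
      rw [Finset.mem_filter, Finset.mem_Icc] at hmax'
      refine ⟨Finset.max' _ hAne, by omega, by omega, ?_, ?_⟩
      · intro m h3 hm hmN1
        have := ttmono m _ h3 hm hmax'.1.2
        linarith [hmax'.2]
      · intro m hm h3 hmN1
        by_contra h
        push_neg at h
        have hmem : m ∈ (Finset.Icc 3 (N+1)).filter (fun m => t ≤ tt m) := by
          rw [Finset.mem_filter, Finset.mem_Icc]
          exact ⟨⟨h3, hmN1⟩, h⟩
        have := Finset.le_max' _ m hmem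
        omega
    · refine ⟨2, le_rfl, by omega, ?_, ?_⟩
      · intro m h3 hm _
        omega
      · intro m _ h3 hmN1
        by_contra h
        push_neg at h
        exact hAne ⟨m, by rw [Finset.mem_filter, Finset.mem_Icc]; exact ⟨⟨h3, hmN1⟩, h⟩⟩
  obtain ⟨m0, hm02, hm0N, hm0le, hm0gt⟩ := hm0ex
  have hw2 : 2 ≤ min m0 N := le_min hm02 (by omega)
  have hwN : min m0 N ≤ N := min_le_right _ _
  -- sign information
  have signE : ∀ m : ℕ, 3 ≤ m → m ≤ N + 1 →
      (t ≤ tt m → mmax p q m ^ t ≤ mmax p q (m-2) ^ t + mmax p q (m-1) ^ t) ∧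
      (tt m < t → mmax p q (m-2) ^ t + mmax p q (m-1) ^ t < mmax p q m ^ t) := by
    intro m h3 hmN1
    obtain ⟨⟨ht0, hpeq⟩, huniq⟩ := htt m h3 hmN1
    have hkey := sign_lemma (mmax p q m) (mmax p q (m-1)) (mmax p q (m-2)) (tt m)
      (hmmax_pos m (by omega)) (hmmax_pos (m-1) (by omega)) (hmmax_pos (m-2) (by omega))
      ht0 hpeq (fun t' ht' hpe => huniq t' ht' hpe)
    have h := hkey t ht
    exact ⟨fun hle => by have := h.1 hle; linarith, fun hlt => by have := h.2 hlt; linarith⟩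
  have Hmer : ∀ J, 1 ≤ J → J + 2 ≤ min m0 N →
      (fun i => mmax p q i ^ t) (J+2) ≤
        (fun i => mmax p q i ^ t) J + (fun i => mmax p q i ^ t) (J+1) := by
    intro J hJ1 hJw
    have h3 : 3 ≤ J + 2 := by omega
    have hmm : J + 2 ≤ m0 := le_trans hJw (min_le_left _ _)
    have hle : J + 2 ≤ N + 1 := by
      have := le_trans hJw (min_le_right _ _)
      omega
    have hsgn := (signE (J+2) h3 hle).1 (hm0le (J+2) h3 hmm hle)
    rw [show J+2-2 = J by omega, show J+2-1 = J+1 by omega] at hsgn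
    simpa using hsgn
  have Hspl : ∀ r, min m0 N + 1 ≤ r → r ≤ N →
      (fun i => mmax p q i ^ t) (r-2) + (fun i => mmax p q i ^ t) (r-1) <
        (fun i => mmax p q i ^ t) r := by
    intro r hr1 hrN
    have h3 : 3 ≤ r := by omega
    have hm0r : m0 < r := by
      rcases le_total m0 N with h | h
      · rw [min_eq_left h] at hr1; omega
      · rw [min_eq_right h] at hr1; omega
    have hsgn := (signE r h3 (by omega)).2 (hm0gt r hm0r h3 (by omega))
    simpa using hsgn
  -- convert hS
  have hSconv : ∀ i, 1 ≤ i → i < n →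
      ∃ s ∈ Sset N i, s ∈ MinV N (fun i => mmax p q i ^ t) i := by
    intro i h1 h2
    obtain ⟨m, hmS, hmV⟩ := hS i h1 h2 t ht
    obtain ⟨s, hsS, hfs⟩ := hmS.1
    have hsV : s ∈ Vset N i := Sset_sub_V N i h1 (by omega) hsS
    refine ⟨s, hsS, hsV, ?_⟩
    intro y hy
    have hfs' : fmeas N p q s t = m := hfs
    have h3 : fmeas N p q s t ≤ fmeas N p q y t := by
      rw [hfs']
      exact hmV.2 ⟨y, hy, rfl⟩
    rw [fmeas_eq_rsum, fmeas_eq_rsum] at h3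
    by_contra hlt
    push_neg at hlt
    have := Real.rpow_lt_rpow (rsum_nonneg N _ hEnonneg y) hlt (show (0:ℝ) < 1/t by positivity)
    linarith
  obtain ⟨z, hzR, hzM⟩ := core_exists N (fun i => mmax p q i ^ t) (min m0 N)
    hN hw2 hwN Hmer Hspl n h1n hnN hSconv
  have hzV : z ∈ Vset N n := hzM.1
  have hmono : ∀ y : Fin N → ℕ, y ∈ Vset N n → fmeas N p q z t ≤ fmeas N p q y t := by
    intro y hy
    rw [fmeas_eq_rsum, fmeas_eq_rsum]
    exact Real.rpow_le_rpow (rsum_nonneg N _ hEnonneg z) (hzM.2 y hy) (show (0:ℝ) ≤ 1/t by positivity)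
  refine ⟨fmeas N p q z t, ⟨⟨z, hzR, rfl⟩, ?_⟩, ⟨⟨z, hzV, rfl⟩, ?_⟩⟩
  · rintro v ⟨y, hyR, rfl⟩
    exact hmono y hyR.1.1
  · rintro v ⟨y, hyV, rfl⟩
    exact hmono y hyV
end
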